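/- arXiv:2407.07508 — 4 statements merged into one kernel-verified Lean document; each statement's English description precedes it below -/
import Mathlib

section
/- (Geronimus polynomials.) Let α ∈ ℂ with 0 < |α| < 1, and set α_n = α for all n ≥ 0. Let f, g ∈ ℂ[[z]] be the unique formal power series satisfying the functional equations f = 1 - z·f + (1-|α|²)·z·f² and g = 1 + (α/|α|²)·z·g - (α/|α|²)·(1-|α|²)·z·f·g. Then for every nonnegative integer m, the generating function of the generalized moments satisfies Σ_{n≥0} μ_{n,m} z^n = g·(z·f)^m as formal power series in ℂ[[z]]. (Here f and g are the formal power series expansions of 2/(1+z+√(1-2z+4|α|²z+z²)) and 2|α|²/(2|α|²+α-αz-α√(1-2z+4|α|²z+z²)), respectively.) -/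
open Polynomial LaurentPolynomial Finset

noncomputable section

/-- Extension of the Verblunsky coefficients to integer indices, with the
convention `α₋₁ = -1` (and junk value `-1` for all negative indices). -/
def az (α : ℕ → ℂ) (k : ℤ) : ℂ := if 0 ≤ k then α k.toNat else -1

/-- The monic OPUC `Φ_n` defined by Szegő's recurrence
`Φ_{n+1}(z) = z·Φ_n(z) - conj(α_n)·Φ_n^*(z)`, where `Φ_n^*` is the reverse
polynomial `reflect n (map conj Φ_n)`. -/
def szego (α : ℕ → ℂ) : ℕ → Polynomial ℂ
  | 0 => 1
  | n + 1 =>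
      Polynomial.X * szego α n -
        Polynomial.C ((starRingEnd ℂ) (α n)) *
          Polynomial.reflect n ((szego α n).map (starRingEnd ℂ))

/-- `f̄(1/z)` as a Laurent polynomial, for a polynomial `f`. -/
def polyBarInv (f : Polynomial ℂ) : LaurentPolynomial ℂ :=
  f.sum fun k c => LaurentPolynomial.C ((starRingEnd ℂ) c) * LaurentPolynomial.T (-(k : ℤ))

/-- `f̄(1/z)` as a Laurent polynomial, for a Laurent polynomial `f`. -/
def laurentBarInv (f : LaurentPolynomial ℂ) : LaurentPolynomial ℂ :=
  Finsupp.sum f.coeff fun k c => LaurentPolynomial.C ((starRingEnd ℂ) c) * LaurentPolynomial.T (-k)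

/-- The generalized moment `μ_{n,r,s} = ⟨Φ_s(z), z^n·Φ_r(z)⟩ / ⟨Φ_s(z), Φ_s(z)⟩`,
where `⟨f,g⟩ = L(f(z)·ḡ(1/z))` and `⟨Φ_s, Φ_s⟩ = ∏_{j<s} (1 - |α_j|²)`. -/
def genMom (L : LaurentPolynomial ℂ →ₗ[ℂ] ℂ) (α : ℕ → ℂ) (n : ℤ) (r s : ℕ) : ℂ :=
  L (Polynomial.toLaurent (szego α s) *
      laurentBarInv (LaurentPolynomial.T n * Polynomial.toLaurent (szego α r))) /
    ∏ j ∈ Finset.range s, ((1 - Complex.normSq (α j) : ℝ) : ℂ)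

/-- `IsLatticePath S p l q` : the list of steps `l`, starting at `p`, forms a lattice
path from `p` to `q` lying weakly above the x-axis, each step `st` taken from a
position `x` satisfying the (possibly position-dependent) step condition `S x st`. -/
def IsLatticePath (S : ℤ × ℤ → ℤ × ℤ → Prop) : ℤ × ℤ → List (ℤ × ℤ) → ℤ × ℤ → Prop
  | p, [], q => p = q ∧ 0 ≤ p.2
  | p, st :: rest, q => 0 ≤ p.2 ∧ S p st ∧ IsLatticePath S (p + st) rest q

/-- The weight of a path: the product of the weights of its steps, where the weight
of a step may depend on its starting position. -/
def pathWeight (w : ℤ × ℤ → ℤ × ℤ → ℂ) : ℤ × ℤ → List (ℤ × ℤ) → ℂ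
  | _, [] => 1
  | p, st :: rest => w p st * pathWeight w (p + st) rest

/-- Łukasiewicz steps: `(1, k)` with `k ≤ 1`. -/
def lukaStep (_p st : ℤ × ℤ) : Prop := st.1 = 1 ∧ st.2 ≤ 1

/-- Łukasiewicz step weights: an up-step has weight `1`, and a step
`(a,b) → (a+1,b-k)` (`0 ≤ k ≤ b`) has weight
`-α_b·conj(α_{b-k-1})·∏_{j=b-k}^{b-1} (1-|α_j|²)`. -/
def wtLstep (α : ℕ → ℂ) (p st : ℤ × ℤ) : ℂ :=
  if st.2 = 1 then 1
  else
    -(az α p.2) * (starRingEnd ℂ) (az α (p.2 + st.2 - 1)) *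
      ∏ j ∈ Finset.Ico (p.2 + st.2) p.2, ((1 - Complex.normSq (az α j) : ℝ) : ℂ)

/-- Gentle Motzkin steps: `(1,1)` (only at even `a+b`), `(1,0)`, `(1,-1)` (only at odd `a+b`). -/
def gentleStep (p st : ℤ × ℤ) : Prop :=
  (st = (1, 1) ∧ Even (p.1 + p.2)) ∨ st = (1, 0) ∨ (st = (1, -1) ∧ Odd (p.1 + p.2))

/-- Gentle Motzkin step weights. -/
def wtMstep (α : ℕ → ℂ) (p st : ℤ × ℤ) : ℂ :=
  if st = (1, 1) then 1
  else if st = (1, -1) then ((1 - Complex.normSq (az α (p.2 - 1)) : ℝ) : ℂ)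
  else if Even (p.1 + p.2) then az α p.2
  else -(starRingEnd ℂ) (az α (p.2 - 1))

/-- Schröder steps: `(1,1)`, `(1,0)`, `(0,-1)`. -/
def schStep (_p st : ℤ × ℤ) : Prop := st = (1, 1) ∨ st = (1, 0) ∨ st = (0, -1)

/-- Schröder step weights. -/
def wtSstep (α : ℕ → ℂ) (p st : ℤ × ℤ) : ℂ :=
  if st = (1, 1) then 1
  else if st = (1, 0) then -((starRingEnd ℂ) (az α (p.2 - 1)) / (starRingEnd ℂ) (az α p.2))
  else
    ((starRingEnd ℂ) (az α (p.2 - 2)) / (starRingEnd ℂ) (az α (p.2 - 1))) *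
      ((1 - Complex.normSq (az α (p.2 - 1)) : ℝ) : ℂ)

/-!
View the Szegő polynomials `Φ_m` as Laurent polynomials and put `Φ̃_m = Φ̄_m(1/z)`
(`laurentBarInvHom`), so that `Φ_m^* = z^m Φ̃_m`. For a Laurent polynomial `x` let
`S(x) = Σ_n L(z⁻ⁿ x) zⁿ`. Szegő's recurrence and its image under `x ↦ x̄(1/z)` become
linear recurrences in `m` for `S(Φ_m)`, `S(z^m Φ̃_m)`, `S(Φ̃_m)` and `S(z^{-m} Φ_m)`.

The last two families form a triangular system in which level `n + 1` of the coefficients is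
read off level `n`, with initial data `L(Φ̃_m) = δ_{m0}`; so they are determined by it. For
constant `α` explicit series built from `f` and `g` solve it, and hence `S(1) = g`.
Starting from there, induction on `m` gives `S(Φ_m) = ρ^m g (zf)^m` with `ρ = 1 - |α|²`,
and `μ_{n,m}` is the `n`-th coefficient of `S(Φ_m)` divided by `‖Φ_m‖² = ρ^m`.
-/

namespace OPUC

def laurentBarInvHom : ℂ[T;T⁻¹] →+* ℂ[T;T⁻¹] :=
  (invert : ℂ[T;T⁻¹] ≃ₐ[ℂ] ℂ[T;T⁻¹]).toRingHom.comp
    (AddMonoidAlgebra.mapRingHom ℤ (starRingEnd ℂ))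

lemma laurentBarInv_add (x y : ℂ[T;T⁻¹]) :
    laurentBarInv (x + y) = laurentBarInv x + laurentBarInv y :=
  Finsupp.sum_add_index' (fun _ => by simp) fun _ _ _ => by rw [map_add, map_add, add_mul]

lemma laurentBarInv_single (n : ℤ) (c : ℂ) :
    laurentBarInv (.single n c) = .single (-n) (starRingEnd ℂ c) := by
  rw [laurentBarInv, AddMonoidAlgebra.coeff_single, Finsupp.sum_single_index (by simp),
    single_eq_C_mul_T]

lemma coe_laurentBarInvHom : ⇑laurentBarInvHom = laurentBarInv := by
  funext x
  induction x using AddMonoidAlgebra.induction_linear with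
  | zero => simp [laurentBarInv]
  | add x y hx hy => rw [map_add, laurentBarInv_add, hx, hy]
  | single n c =>
    rw [laurentBarInv_single, laurentBarInvHom, RingHom.comp_apply,
      AddMonoidAlgebra.mapRingHom_single]
    ext m
    simp

@[simp] lemma coeff_laurentBarInvHom (x : ℂ[T;T⁻¹]) (n : ℤ) :
    (laurentBarInvHom x).coeff n = starRingEnd ℂ (x.coeff (-n)) := by
  simp [laurentBarInvHom]

@[simp] lemma laurentBarInvHom_laurentBarInvHom (x : ℂ[T;T⁻¹]) :
    laurentBarInvHom (laurentBarInvHom x) = x := by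
  ext n; simp

@[simp] lemma laurentBarInvHom_T (n : ℤ) : laurentBarInvHom (T n) = T (-n) := by
  ext m; simp [neg_eq_iff_eq_neg]

@[simp] lemma laurentBarInvHom_C (c : ℂ) :
    laurentBarInvHom (LaurentPolynomial.C c) = LaurentPolynomial.C (starRingEnd ℂ c) := by
  ext m; by_cases hm : m = 0 <;> simp [hm]

lemma laurentBarInvHom_smul (c : ℂ) (x : ℂ[T;T⁻¹]) :
    laurentBarInvHom (c • x) = starRingEnd ℂ c • laurentBarInvHom x := by
  ext m; simp

lemma polyBarInv_eq (p : ℂ[X]) : polyBarInv p = laurentBarInvHom (toLaurent p) := by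
  conv_rhs => rw [p.as_sum_support_C_mul_X_pow]
  simp [polyBarInv, Polynomial.sum, map_sum]

lemma toLaurent_map {R S : Type*} [Semiring R] [Semiring S] (f : R →+* S) (p : R[X]) :
    toLaurent (p.map f) = AddMonoidAlgebra.mapRingHom ℤ f (toLaurent p) := by
  induction p using Polynomial.induction_on' with
  | add p q hp hq => simp [hp, hq]
  | monomial n c =>
    simp [← Polynomial.C_mul_X_pow_eq_monomial, ← single_eq_C_mul_T]

lemma toLaurent_reflect {R : Type*} [CommSemiring R] {p : R[X]} {N : ℕ} (h : p.natDegree ≤ N) :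
    toLaurent (p.reflect N) = invert (toLaurent p) * T N := by
  have h_split := Polynomial.reflect_mul p 1 le_rfl
    (Polynomial.natDegree_one.trans_le (Nat.zero_le (N - p.natDegree)))
  rw [Nat.add_sub_cancel' h, mul_one, Polynomial.reflect_one] at h_split
  rw [h_split, map_mul, Polynomial.toLaurent_X_pow, ← Polynomial.reverse,
    LaurentPolynomial.toLaurent_reverse, mul_assoc, ← T_add]
  push_cast [h]
  ring_nf

lemma natDegree_szego_le (α : ℕ → ℂ) (m : ℕ) : (szego α m).natDegree ≤ m := by
  induction m with
  | zero => simp [szego]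
  | succ m ih =>
    refine (Polynomial.natDegree_sub_le _ _).trans (max_le ?_ ?_)
    · exact Polynomial.natDegree_mul_le.trans (by simp; omega)
    · refine (Polynomial.natDegree_C_mul_le _ _).trans (Polynomial.natDegree_reflect_le.trans ?_)
      exact max_le m.le_succ ((Polynomial.natDegree_map_le).trans (ih.trans m.le_succ))

lemma toLaurent_szego_succ (α : ℕ → ℂ) (m : ℕ) :
    toLaurent (szego α (m + 1)) = T 1 * toLaurent (szego α m) -
      starRingEnd ℂ (α m) • (T m * laurentBarInvHom (toLaurent (szego α m))) := by
  rw [szego, map_sub, map_mul, map_mul, Polynomial.toLaurent_X, Polynomial.toLaurent_C,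
    toLaurent_reflect ((Polynomial.natDegree_map_le).trans (natDegree_szego_le α m)),
    toLaurent_map, LaurentPolynomial.smul_eq_C_mul, T_mul (m : ℤ)]
  rfl

lemma laurentBarInvHom_toLaurent_szego_succ (α : ℕ → ℂ) (m : ℕ) :
    laurentBarInvHom (toLaurent (szego α (m + 1))) =
      T (-1) * laurentBarInvHom (toLaurent (szego α m)) -
        α m • (T (-m) * toLaurent (szego α m)) := by
  simp [toLaurent_szego_succ, laurentBarInvHom_smul]

def momentSeries (L : ℂ[T;T⁻¹] →ₗ[ℂ] ℂ) : ℂ[T;T⁻¹] →ₗ[ℂ] PowerSeries ℂ where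
  toFun x := PowerSeries.mk fun n => L (T (-n) * x)
  map_add' x y := by ext; simp [mul_add]
  map_smul' c x := by ext; simp

@[simp] lemma coeff_momentSeries (L : ℂ[T;T⁻¹] →ₗ[ℂ] ℂ) (x : ℂ[T;T⁻¹]) (n : ℕ) :
    PowerSeries.coeff n (momentSeries L x) = L (T (-n) * x) := by
  simp [momentSeries]

@[simp] lemma constantCoeff_momentSeries (L : ℂ[T;T⁻¹] →ₗ[ℂ] ℂ) (x : ℂ[T;T⁻¹]) :
    PowerSeries.constantCoeff (momentSeries L x) = L x := by
  simp [← PowerSeries.coeff_zero_eq_constantCoeff_apply]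

lemma X_mul_momentSeries_T_neg_one_mul (L : ℂ[T;T⁻¹] →ₗ[ℂ] ℂ) (x : ℂ[T;T⁻¹]) :
    PowerSeries.X * momentSeries L (T (-1) * x) = momentSeries L x - PowerSeries.C (L x) := by
  ext n
  rcases n with _ | n
  · simp
  · simp [PowerSeries.coeff_succ_X_mul, ← mul_assoc]
    ring_nf

lemma momentSeries_T_one_mul (L : ℂ[T;T⁻¹] →ₗ[ℂ] ℂ) (x : ℂ[T;T⁻¹]) :
    momentSeries L (T 1 * x) =
      PowerSeries.X * momentSeries L x + PowerSeries.C (L (T 1 * x)) := by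
  have h := X_mul_momentSeries_T_neg_one_mul L (T 1 * x)
  rw [← mul_assoc, ← T_add, neg_add_cancel, T_zero, one_mul] at h
  rw [h, sub_add_cancel]

section Recurrences

variable (L : ℂ[T;T⁻¹] →ₗ[ℂ] ℂ) (α : ℕ → ℂ) (m : ℕ)

lemma L_T_one_mul_szego :
    L (T 1 * toLaurent (szego α m)) =
      starRingEnd ℂ (α m) * L (T m * laurentBarInvHom (toLaurent (szego α m))) +
        L (toLaurent (szego α (m + 1))) := by
  rw [toLaurent_szego_succ, map_sub, map_smul, smul_eq_mul]
  ring

lemma momentSeries_szego_succ :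
    momentSeries L (toLaurent (szego α (m + 1))) =
      PowerSeries.X * momentSeries L (toLaurent (szego α m)) +
        PowerSeries.C (L (T 1 * toLaurent (szego α m))) -
        PowerSeries.C (starRingEnd ℂ (α m)) *
          momentSeries L (T m * laurentBarInvHom (toLaurent (szego α m))) := by
  rw [toLaurent_szego_succ, map_sub, map_smul, momentSeries_T_one_mul,
    PowerSeries.smul_eq_C_mul]

lemma momentSeries_reverse_szego_succ :
    momentSeries L (T (m + 1 : ℕ) * laurentBarInvHom (toLaurent (szego α (m + 1)))) =
      momentSeries L (T m * laurentBarInvHom (toLaurent (szego α m))) -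
        PowerSeries.C (α m) * (PowerSeries.X * momentSeries L (toLaurent (szego α m)) +
          PowerSeries.C (L (T 1 * toLaurent (szego α m)))) := by
  rw [laurentBarInvHom_toLaurent_szego_succ, mul_sub, mul_smul_comm, ← mul_assoc, ← mul_assoc,
    ← T_add, ← T_add, map_sub, map_smul, ← momentSeries_T_one_mul, PowerSeries.smul_eq_C_mul]
  push_cast
  ring_nf

lemma X_mul_momentSeries_bar_szego_succ :
    PowerSeries.X * momentSeries L (laurentBarInvHom (toLaurent (szego α (m + 1)))) =
      momentSeries L (laurentBarInvHom (toLaurent (szego α m))) -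
        PowerSeries.C (L (laurentBarInvHom (toLaurent (szego α m)))) -
        PowerSeries.C (α m) *
          (PowerSeries.X * momentSeries L (T (-m) * toLaurent (szego α m))) := by
  rw [laurentBarInvHom_toLaurent_szego_succ, map_sub, map_smul, mul_sub,
    X_mul_momentSeries_T_neg_one_mul, PowerSeries.smul_eq_C_mul]
  ring

lemma X_mul_momentSeries_T_neg_szego_succ :
    PowerSeries.X * momentSeries L (T (-(m + 1 : ℕ)) * toLaurent (szego α (m + 1))) =
      PowerSeries.X * momentSeries L (T (-m) * toLaurent (szego α m)) -
        PowerSeries.C (starRingEnd ℂ (α m)) *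
          (momentSeries L (laurentBarInvHom (toLaurent (szego α m))) -
            PowerSeries.C (L (laurentBarInvHom (toLaurent (szego α m))))) := by
  rw [toLaurent_szego_succ, mul_sub, mul_smul_comm, ← mul_assoc, ← mul_assoc,
    ← T_add, ← T_add, map_sub, map_smul, PowerSeries.smul_eq_C_mul, mul_sub,
    ← X_mul_momentSeries_T_neg_one_mul]
  push_cast
  ring_nf

end Recurrences

/-- The recurrences satisfied by `C k = S(Φ̃_k)` and `D k = S(z^{-k} Φ_k)`, with `e k = L(Φ̃_k)`. -/
structure IsMomentSystem {R : Type*} [CommRing R] (a b e : ℕ → R) (C D : ℕ → PowerSeries R) :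
    Prop where
  D_zero : D 0 = C 0
  X_mul_C_succ : ∀ k, PowerSeries.X * C (k + 1) =
    C k - PowerSeries.C (e k) - PowerSeries.C (a k) * (PowerSeries.X * D k)
  X_mul_D_succ : ∀ k, PowerSeries.X * D (k + 1) =
    PowerSeries.X * D k - PowerSeries.C (b k) * (C k - PowerSeries.C (e k))

namespace IsMomentSystem

variable {R : Type*} [CommRing R] {a b e : ℕ → R} {C D C' D' : ℕ → PowerSeries R}

lemma coeff_zero_C (h : IsMomentSystem a b e C D) (k : ℕ) :
    PowerSeries.coeff 0 (C k) = e k := by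
  have h_coeff := congrArg (PowerSeries.coeff 0) (h.X_mul_C_succ k)
  simp only [PowerSeries.coeff_zero_X_mul, map_sub, PowerSeries.coeff_C_mul,
    PowerSeries.coeff_zero_C, mul_zero, sub_zero] at h_coeff
  linear_combination -h_coeff

lemma coeff_succ_C (h : IsMomentSystem a b e C D) (k n : ℕ) :
    PowerSeries.coeff (n + 1) (C k) =
      PowerSeries.coeff n (C (k + 1)) + a k * PowerSeries.coeff n (D k) := by
  have h_coeff := congrArg (PowerSeries.coeff (n + 1)) (h.X_mul_C_succ k)
  simp only [PowerSeries.coeff_succ_X_mul, map_sub, PowerSeries.coeff_C_mul,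
    PowerSeries.coeff_C, Nat.succ_ne_zero, if_false, sub_zero] at h_coeff
  linear_combination -h_coeff

lemma coeff_D_succ (h : IsMomentSystem a b e C D) (k n : ℕ) :
    PowerSeries.coeff n (D (k + 1)) = PowerSeries.coeff n (D k) -
      b k * (PowerSeries.coeff n (C (k + 1)) + a k * PowerSeries.coeff n (D k)) := by
  have h_coeff := congrArg (PowerSeries.coeff (n + 1)) (h.X_mul_D_succ k)
  simp only [PowerSeries.coeff_succ_X_mul, map_sub, PowerSeries.coeff_C_mul,
    PowerSeries.coeff_C, Nat.succ_ne_zero, if_false, sub_zero] at h_coeff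
  rw [h_coeff, h.coeff_succ_C]

lemma coeff_D_eq_of_coeff_C_eq (h : IsMomentSystem a b e C D) (h' : IsMomentSystem a b e C' D')
    {n : ℕ} (hC : ∀ k, PowerSeries.coeff n (C k) = PowerSeries.coeff n (C' k)) (k : ℕ) :
    PowerSeries.coeff n (D k) = PowerSeries.coeff n (D' k) := by
  induction k with
  | zero => rw [h.D_zero, h'.D_zero, hC]
  | succ k ih => rw [h.coeff_D_succ, h'.coeff_D_succ, ih, hC]

lemma coeff_C_eq (h : IsMomentSystem a b e C D) (h' : IsMomentSystem a b e C' D') (n k : ℕ) :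
    PowerSeries.coeff n (C k) = PowerSeries.coeff n (C' k) := by
  induction n generalizing k with
  | zero => rw [h.coeff_zero_C, h'.coeff_zero_C]
  | succ n ih => rw [h.coeff_succ_C, h'.coeff_succ_C, ih, h.coeff_D_eq_of_coeff_C_eq h' ih]

lemma unique (h : IsMomentSystem a b e C D) (h' : IsMomentSystem a b e C' D') : C = C' :=
  funext fun k => PowerSeries.ext fun n => h.coeff_C_eq h' n k

end IsMomentSystem

section Geronimus

variable {R : Type*} [CommRing R] (a b ρ β : R) (f g : PowerSeries R)

/-- With `ρ = 1 - a ā` and `β = 1 / ā`, these are the closed forms of `S(Φ̃_k)`, `S(z^{-k} Φ_k)`,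
`S(Φ_m)` and `S(Φ_m^*)` for constant Verblunsky coefficients `a`. -/
def geronimusC : ℕ → PowerSeries R
  | 0 => g
  | k + 1 => (PowerSeries.C β * (1 - PowerSeries.C ρ * f) - PowerSeries.C a) * g *
      (PowerSeries.C ρ * f) ^ k

def geronimusD (k : ℕ) : PowerSeries R := g * (PowerSeries.C ρ * f) ^ k

def geronimusA (m : ℕ) : PowerSeries R := PowerSeries.C ρ ^ m * (g * (PowerSeries.X * f) ^ m)

def geronimusB (m : ℕ) : PowerSeries R :=
  PowerSeries.C ρ ^ m *
    (1 + PowerSeries.C β * PowerSeries.X *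
      ((1 - PowerSeries.C ρ * f) * g * (PowerSeries.X * f) ^ m))

variable {a b ρ β f g}

lemma isMomentSystem_geronimus (hρ : ρ = 1 - a * b) (hβ : β * b = 1)
    (hf : f = 1 - PowerSeries.X * f + PowerSeries.C ρ * PowerSeries.X * f ^ 2)
    (hg : g = 1 + PowerSeries.C β * PowerSeries.X * g -
      PowerSeries.C (β * ρ) * PowerSeries.X * f * g) :
    IsMomentSystem (fun _ => a) (fun _ => b) (fun k => if k = 0 then 1 else 0)
      (geronimusC a ρ β f g) (geronimusD ρ f g) := by
  have hρC : PowerSeries.C ρ = 1 - PowerSeries.C a * PowerSeries.C b := by simp [hρ]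
  have hβC : PowerSeries.C β * PowerSeries.C b = (1 : PowerSeries R) := by
    rw [← map_mul, hβ, map_one]
  rw [map_mul] at hg
  refine ⟨by simp [geronimusC, geronimusD], fun k => ?_, fun k => ?_⟩
  · rcases k with _ | k
    · simp only [geronimusC, geronimusD, if_pos, map_one, pow_zero, mul_one]
      linear_combination -hg
    · simp only [geronimusC, geronimusD, Nat.succ_ne_zero, if_false, map_zero, sub_zero]
      linear_combination (PowerSeries.C ρ * f) ^ k * g *
        (PowerSeries.C β * PowerSeries.C ρ * hf + PowerSeries.C β * hρC - PowerSeries.C a * hβC)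
  · rcases k with _ | k
    · simp only [geronimusC, geronimusD, if_pos, map_one, pow_zero, mul_one]
      linear_combination PowerSeries.C b * hg +
        PowerSeries.X * g * (1 - PowerSeries.C ρ * f) * hβC
    · simp only [geronimusC, geronimusD, Nat.succ_ne_zero, if_false, map_zero, sub_zero]
      linear_combination (PowerSeries.C ρ * f) ^ k * g * (-PowerSeries.C ρ * hf - hρC +
        (1 - PowerSeries.C ρ * f) * hβC)

lemma constantCoeff_geronimusB (m : ℕ) :
    PowerSeries.constantCoeff (geronimusB ρ β f g m) = ρ ^ m := by
  simp [geronimusB]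

lemma geronimusA_succ (hβ : β * b = 1) (m : ℕ) :
    geronimusA ρ f g (m + 1) = PowerSeries.X * geronimusA ρ f g m +
      PowerSeries.C (b * ρ ^ m) - PowerSeries.C b * geronimusB ρ β f g m := by
  have hβC : PowerSeries.C β * PowerSeries.C b = (1 : PowerSeries R) := by
    rw [← map_mul, hβ, map_one]
  simp only [geronimusA, geronimusB, map_mul, map_pow]
  linear_combination PowerSeries.C ρ ^ m * PowerSeries.X * g * (PowerSeries.X * f) ^ m *
    (1 - PowerSeries.C ρ * f) * hβC

lemma geronimusB_succ (hρ : ρ = 1 - a * b) (hβ : β * b = 1)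
    (hf : f = 1 - PowerSeries.X * f + PowerSeries.C ρ * PowerSeries.X * f ^ 2) (m : ℕ) :
    geronimusB ρ β f g (m + 1) = geronimusB ρ β f g m -
      PowerSeries.C a * (PowerSeries.X * geronimusA ρ f g m + PowerSeries.C (b * ρ ^ m)) := by
  have hρC : PowerSeries.C ρ = 1 - PowerSeries.C a * PowerSeries.C b := by simp [hρ]
  have hβC : PowerSeries.C β * PowerSeries.C b = (1 : PowerSeries R) := by
    rw [← map_mul, hβ, map_one]
  simp only [geronimusA, geronimusB, map_mul, map_pow]
  linear_combination PowerSeries.C ρ ^ m * (hρC + PowerSeries.X * g * (PowerSeries.X * f) ^ m *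
    (PowerSeries.C β * PowerSeries.C ρ * hf + PowerSeries.C β * hρC - PowerSeries.C a * hβC))

end Geronimus

lemma isMomentSystem_momentSeries (L : ℂ[T;T⁻¹] →ₗ[ℂ] ℂ) (α : ℕ → ℂ) :
    IsMomentSystem α (fun k => starRingEnd ℂ (α k))
      (fun k => L (laurentBarInvHom (toLaurent (szego α k))))
      (fun k => momentSeries L (laurentBarInvHom (toLaurent (szego α k))))
      (fun k => momentSeries L (T (-k) * toLaurent (szego α k))) where
  D_zero := by simp [szego]
  X_mul_C_succ := X_mul_momentSeries_bar_szego_succ L α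
  X_mul_D_succ := X_mul_momentSeries_T_neg_szego_succ L α

section ConstantCoefficients

variable {L : ℂ[T;T⁻¹] →ₗ[ℂ] ℂ} {a ρ β : ℂ} {f g : PowerSeries ℂ}

lemma momentSeries_one_of_const_verblunsky (hL1 : L 1 = 1)
    (hLbar : ∀ k : ℕ, 1 ≤ k → L (polyBarInv (szego (fun _ => a) k)) = 0)
    (hρ : ρ = 1 - a * starRingEnd ℂ a) (hβ : β * starRingEnd ℂ a = 1)
    (hf : f = 1 - PowerSeries.X * f + PowerSeries.C ρ * PowerSeries.X * f ^ 2)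
    (hg : g = 1 + PowerSeries.C β * PowerSeries.X * g -
      PowerSeries.C (β * ρ) * PowerSeries.X * f * g) :
    momentSeries L 1 = g := by
  have he : (fun k => L (laurentBarInvHom (toLaurent (szego (fun _ => a) k)))) =
      fun k => if k = 0 then 1 else 0 := by
    funext k
    rcases k with _ | k
    · simpa [szego] using hL1
    · simpa [polyBarInv_eq] using hLbar (k + 1) (by omega)
  have hsys := isMomentSystem_momentSeries L (fun _ => a)
  rw [he] at hsys
  simpa [szego, geronimusC] using congrFun (hsys.unique (isMomentSystem_geronimus hρ hβ hf hg)) 0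

theorem momentSeries_szego_of_const_verblunsky (hL1 : L 1 = 1)
    (hLphi : ∀ k : ℕ, 1 ≤ k → L (toLaurent (szego (fun _ => a) k)) = 0)
    (hLbar : ∀ k : ℕ, 1 ≤ k → L (polyBarInv (szego (fun _ => a) k)) = 0)
    (hρ : ρ = 1 - a * starRingEnd ℂ a) (hβ : β * starRingEnd ℂ a = 1)
    (hf : f = 1 - PowerSeries.X * f + PowerSeries.C ρ * PowerSeries.X * f ^ 2)
    (hg : g = 1 + PowerSeries.C β * PowerSeries.X * g -
      PowerSeries.C (β * ρ) * PowerSeries.X * f * g) (m : ℕ) :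
    momentSeries L (toLaurent (szego (fun _ => a) m)) = geronimusA ρ f g m ∧
      momentSeries L (T m * laurentBarInvHom (toLaurent (szego (fun _ => a) m))) =
        geronimusB ρ β f g m := by
  induction m with
  | zero =>
    have hg0 := momentSeries_one_of_const_verblunsky hL1 hLbar hρ hβ hf hg
    refine ⟨by simpa [szego, geronimusA] using hg0, ?_⟩
    simp only [szego, map_one, Nat.cast_zero, T_zero, mul_one, hg0, geronimusB, pow_zero, one_mul]
    rw [map_mul] at hg
    linear_combination hg
  | succ m ih =>
    have hT : L (T 1 * toLaurent (szego (fun _ => a) m)) = starRingEnd ℂ a * ρ ^ m := by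
      rw [L_T_one_mul_szego, hLphi (m + 1) (by omega), ← constantCoeff_momentSeries, ih.2,
        constantCoeff_geronimusB, add_zero]
    rw [momentSeries_szego_succ, momentSeries_reverse_szego_succ, hT, ih.1, ih.2,
      geronimusA_succ hβ, geronimusB_succ hρ hβ hf]
    exact ⟨rfl, rfl⟩

end ConstantCoefficients

lemma genMom_eq_coeff_momentSeries (L : ℂ[T;T⁻¹] →ₗ[ℂ] ℂ) (α : ℕ → ℂ) (n m : ℕ) :
    genMom L α n 0 m = PowerSeries.coeff n (momentSeries L (toLaurent (szego α m))) /
      ∏ j ∈ range m, ((1 - Complex.normSq (α j) : ℝ) : ℂ) := by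
  rw [genMom, ← coe_laurentBarInvHom, coeff_momentSeries, szego, map_one, mul_one,
    laurentBarInvHom_T, mul_comm]

end OPUC

/-- Geronimus polynomials: with constant Verblunsky coefficients
`α_n = α`, `0 < |α| < 1`, and `f, g` the formal power series satisfying the stated
functional equations, for every `m ≥ 0` one has `Σ_{n≥0} μ_{n,m} zⁿ = g·(z·f)^m`. -/
theorem geronimus_generating_function (α : ℂ) (hα0 : α ≠ 0) (hα1 : ‖α‖ < 1)
    (L : LaurentPolynomial ℂ →ₗ[ℂ] ℂ) (hL1 : L 1 = 1)
    (hLphi : ∀ k : ℕ, 1 ≤ k → L (Polynomial.toLaurent (szego (fun _ => α) k)) = 0)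
    (hLbar : ∀ k : ℕ, 1 ≤ k → L (polyBarInv (szego (fun _ => α) k)) = 0)
    (f g : PowerSeries ℂ)
    (hf : f = 1 - PowerSeries.X * f +
        PowerSeries.C ((1 - Complex.normSq α : ℝ) : ℂ) * PowerSeries.X * f ^ 2)
    (hg : g = 1 + PowerSeries.C (α / ((Complex.normSq α : ℝ) : ℂ)) * PowerSeries.X * g -
        PowerSeries.C (α / ((Complex.normSq α : ℝ) : ℂ) * ((1 - Complex.normSq α : ℝ) : ℂ)) *
          PowerSeries.X * f * g)
    (m : ℕ) :
    PowerSeries.mk (fun n : ℕ => genMom L (fun _ => α) (n : ℤ) 0 m) =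
      g * (PowerSeries.X * f) ^ m := by
  have hρ : ((1 - Complex.normSq α : ℝ) : ℂ) = 1 - α * starRingEnd ℂ α := by
    rw [Complex.mul_conj]; push_cast; ring
  have hβ : α / ((Complex.normSq α : ℝ) : ℂ) * starRingEnd ℂ α = 1 := by
    rw [div_mul_eq_mul_div, Complex.mul_conj, div_self]
    exact_mod_cast (Complex.normSq_pos.mpr hα0).ne'
  have hρ0 : ((1 - Complex.normSq α : ℝ) : ℂ) ≠ 0 := by
    rw [Complex.normSq_eq_norm_sq]
    exact_mod_cast (sub_pos.mpr (pow_lt_one₀ (norm_nonneg α) hα1 two_ne_zero)).ne'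
  ext n
  rw [PowerSeries.coeff_mk, OPUC.genMom_eq_coeff_momentSeries,
    (OPUC.momentSeries_szego_of_const_verblunsky hL1 hLphi hLbar hρ hβ hf hg m).1, OPUC.geronimusA,
    ← map_pow, PowerSeries.coeff_C_mul, prod_const, card_range]
  field_simp

end
end

section
/- (Single inserted mass point, generalized moments.) Let γ ∈ (0,1) and set α_n = γ/(1+nγ) for all n ≥ 0. Then for all nonnegative integers n, r, s with r > 0: μ_{n,r,s} = δ_{n+r,s} if s ≥ n+r; μ_{n,r,s} = -nγ²/((1+(r-1)γ)(1+sγ)) if n-1 < s < n+r; and μ_{n,r,s} = (1-γ)γ/((1+(r-1)γ)(1+sγ)) if 0 ≤ s ≤ n-1. -/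
open Polynomial LaurentPolynomial Finset

noncomputable section

/-!
The functional `L` is integration against `(1-γ)·dθ/2π + γ·δ_1`. For real `α` with
`1/α_{n+1} = 1/α_n + 1`, Szegő's recurrence gives `Φ_s = z^s - α_{s-1}(1 + z + ⋯ + z^{s-1})`, so
the orthogonality of `Φ_k` and of `Φ̄_k(1/z)` to `1` determines the moments inductively:
`L(z^m) = γ` for `m ≠ 0`. Since `f ↦ f̄(1/z)` is a ring endomorphism of the Laurent polynomials,
`⟨Φ_s, z^n Φ_r⟩` expands into four sums of moments. The mass point contributes
`γ Φ_s(1) Φ_r(1)`, and the Lebesgue part counts the exponents shared by `Φ_s` and `z^n Φ_r`.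
Dividing by `‖Φ_s‖² = (1-γ)(1+sγ)/(1+(s-1)γ)` gives the three cases.
-/

/-- `f(z) ↦ f̄(1/z)`. -/
def conjInvert : LaurentPolynomial ℂ →+* LaurentPolynomial ℂ :=
  eval₂ (LaurentPolynomial.C.comp (starRingEnd ℂ)) (unitOfInvertible (T (-1)))

@[simp]
theorem conjInvert_C (c : ℂ) :
    conjInvert (LaurentPolynomial.C c) = LaurentPolynomial.C (starRingEnd ℂ c) :=
  eval₂_C _ _ _

@[simp]
theorem conjInvert_T (m : ℤ) : conjInvert (T m) = T (-m) := by
  obtain ⟨k, rfl | rfl⟩ := Int.eq_nat_or_neg m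
  · rw [conjInvert, eval₂_T_n]
    exact (T_pow _ _).trans (by rw [mul_neg_one])
  · rw [conjInvert, eval₂_T_neg_n, neg_neg]
    exact (T_pow _ _).trans (by rw [neg_neg, mul_one])

theorem laurentBarInv_eq_conjInvert (f : LaurentPolynomial ℂ) :
    laurentBarInv f = conjInvert f := by
  induction f using LaurentPolynomial.induction_on' with
  | add p q hp hq =>
    rw [map_add, ← hp, ← hq, laurentBarInv, laurentBarInv, laurentBarInv,
      AddMonoidAlgebra.coeff_add]
    exact Finsupp.sum_add_index' (fun _ => by simp) fun _ _ _ => by simp [add_mul]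
  | C_mul_T n a =>
    rw [map_mul, conjInvert_C, conjInvert_T, laurentBarInv, ← single_eq_C_mul_T,
      AddMonoidAlgebra.coeff_single]
    exact Finsupp.sum_single_index (by simp)

theorem polyBarInv_eq_conjInvert (p : ℂ[X]) : polyBarInv p = conjInvert (toLaurent p) := by
  induction p using Polynomial.induction_on' with
  | add p q hp hq =>
    rw [map_add, map_add, ← hp, ← hq, polyBarInv, polyBarInv, polyBarInv]
    exact Polynomial.sum_add_index _ _ _ (fun _ => by simp) fun _ _ _ => by simp [add_mul]
  | monomial n a =>
    rw [polyBarInv, Polynomial.sum_monomial_index _ _ (by simp), toLaurent_C_mul_T,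
      map_mul, conjInvert_C, conjInvert_T]

theorem Polynomial.reflect_sum {R ι : Type*} [Semiring R] (N : ℕ) (s : Finset ι)
    (f : ι → R[X]) : reflect N (∑ i ∈ s, f i) = ∑ i ∈ s, reflect N (f i) :=
  map_sum (⟨⟨reflect N, reflect_zero⟩, fun f g => reflect_add f g N⟩ : R[X] →+ R[X]) f s

theorem Polynomial.reflect_succ_geom_sum {R : Type*} [Semiring R] (n : ℕ) :
    reflect (n + 1) (∑ k ∈ range (n + 1), (X : R[X]) ^ k) = X * ∑ k ∈ range (n + 1), X ^ k := by
  rw [reflect_sum, mul_sum, ← sum_range_reflect]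
  refine sum_congr rfl fun k hk => ?_
  rw [reflect_monomial, revAt_le (by simp at hk; omega), ← pow_succ']
  congr 1
  simp at hk; omega

theorem szego_succ_eq_of_recurrence (α : ℕ → ℂ) (hreal : ∀ n, starRingEnd ℂ (α n) = α n)
    (hrec : ∀ n, α n * (1 - α (n + 1)) = α (n + 1)) (n : ℕ) :
    szego α (n + 1) = X ^ (n + 1) - Polynomial.C (α n) * ∑ k ∈ range (n + 1), X ^ k := by
  induction n with
  | zero => simp [szego, hreal]
  | succ n ih =>
    have hstar : reflect (n + 1) ((szego α (n + 1)).map (starRingEnd ℂ)) =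
        1 - Polynomial.C (α n) * (X * ∑ k ∈ range (n + 1), X ^ k) := by
      simp only [ih, Polynomial.map_sub, Polynomial.map_mul, Polynomial.map_C, hreal,
        Polynomial.map_sum, Polynomial.map_pow, Polynomial.map_X]
      rw [reflect_sub, reflect_C_mul, reflect_monomial, revAt_le le_rfl, Nat.sub_self, pow_zero,
        reflect_succ_geom_sum]
    have hC : Polynomial.C (α n) * (1 - Polynomial.C (α (n + 1))) =
        Polynomial.C (α (n + 1)) := by
      rw [← map_one Polynomial.C, ← map_sub, ← map_mul, hrec]
    rw [szego, hstar, ih, hreal, geom_sum_succ (x := (X : ℂ[X])) (n := n + 1)]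
    linear_combination (-(X * ∑ k ∈ range (n + 1), (X : ℂ[X]) ^ k)) * hC

def massPointVerblunsky (γ : ℝ) (n : ℕ) : ℂ := ((γ / (1 + n * γ) : ℝ) : ℂ)

/-- `Φ_s = z^s - tailCoeff γ s · (1 + z + ⋯ + z^{s-1})`; for `s ≥ 1` this is `α_{s-1}`. -/
def tailCoeff (γ : ℝ) (s : ℕ) : ℝ := γ / (1 + ((s : ℝ) - 1) * γ)

theorem massPointVerblunsky_eq_tailCoeff (γ : ℝ) (n : ℕ) :
    massPointVerblunsky γ n = tailCoeff γ (n + 1) := by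
  simp [massPointVerblunsky, tailCoeff]

theorem toLaurent_szego_massPoint {γ : ℝ} (hγ : 0 ≤ γ) (s : ℕ) :
    toLaurent (szego (massPointVerblunsky γ) s) =
      T s - LaurentPolynomial.C (tailCoeff γ s : ℂ) * ∑ k ∈ range s, T k := by
  have hreal (n : ℕ) : starRingEnd ℂ (massPointVerblunsky γ n) = massPointVerblunsky γ n :=
    Complex.conj_ofReal _
  have hrec (n : ℕ) : massPointVerblunsky γ n * (1 - massPointVerblunsky γ (n + 1)) =
      massPointVerblunsky γ (n + 1) := by
    have h₁ : 0 < 1 + n * γ := by positivity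
    have h₂ : 0 < 1 + (n + 1) * γ := by positivity
    have key : γ / (1 + n * γ) * (1 - γ / (1 + (n + 1) * γ)) = γ / (1 + (n + 1) * γ) := by
      field_simp
      ring
    simp only [massPointVerblunsky]
    exact_mod_cast key
  cases s with
  | zero => simp [szego]
  | succ s =>
    rw [szego_succ_eq_of_recurrence _ hreal hrec, massPointVerblunsky_eq_tailCoeff]
    simp only [map_sub, map_mul, map_sum, toLaurent_C, toLaurent_X_pow]

/-- The moments of `(1-γ)·dθ/2π + γ·δ_1`. -/
def massPointMoment (γ : ℝ) (m : ℤ) : ℂ := if m = 0 then 1 else γ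

theorem massPointMoment_neg (γ : ℝ) (m : ℤ) : massPointMoment γ (-m) = massPointMoment γ m := by
  simp [massPointMoment]

theorem eq_massPointMoment_of_recurrence {γ : ℝ} (hγ : 0 ≤ γ) {g : ℕ → ℂ} (h₀ : g 0 = 1)
    (hsucc : ∀ t : ℕ, g (t + 1) = massPointVerblunsky γ t * ∑ k ∈ range (t + 1), g k) (k : ℕ) :
    g k = massPointMoment γ k := by
  simp only [massPointMoment, Nat.cast_eq_zero]
  induction k using Nat.strong_induction_on with
  | _ k ih =>
    rcases k with _ | t
    · exact h₀
    have hsum : ∑ k ∈ range (t + 1), g k = 1 + t * γ := by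
      rw [sum_range_succ', h₀, sum_congr rfl fun k hk =>
        (ih (k + 1) (by simp at hk; omega)).trans (if_neg (by omega))]
      simp [add_comm]
    have h : ((1 + t * γ : ℝ) : ℂ) ≠ 0 := Complex.ofReal_ne_zero.mpr (by positivity)
    rw [hsucc, hsum, if_neg t.succ_ne_zero, massPointVerblunsky]
    push_cast at h ⊢
    exact div_mul_cancel₀ _ h

theorem LaurentPolynomial.linearMap_C_mul {R M : Type*} [CommSemiring R] [AddCommMonoid M]
    [Module R M] (L : R[T;T⁻¹] →ₗ[R] M) (c : R) (f : R[T;T⁻¹]) :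
    L (LaurentPolynomial.C c * f) = c • L f := by
  rw [← LaurentPolynomial.smul_eq_C_mul, map_smul]

theorem map_T_eq_massPointMoment {γ : ℝ} (hγ : 0 ≤ γ) (L : LaurentPolynomial ℂ →ₗ[ℂ] ℂ)
    (hL1 : L 1 = 1)
    (hLphi : ∀ k : ℕ, 1 ≤ k → L (toLaurent (szego (massPointVerblunsky γ) k)) = 0)
    (hLbar : ∀ k : ℕ, 1 ≤ k → L (polyBarInv (szego (massPointVerblunsky γ) k)) = 0) (m : ℤ) :
    L (T m) = massPointMoment γ m := by
  have hpos (k : ℕ) : L (T k) = massPointMoment γ k := by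
    refine eq_massPointMoment_of_recurrence hγ (g := fun k : ℕ => L (T k)) (by simpa using hL1)
      (fun t => ?_) k
    have h := hLphi (t + 1) (by omega)
    rw [toLaurent_szego_massPoint hγ, map_sub, linearMap_C_mul, smul_eq_mul, map_sum,
      sub_eq_zero, ← massPointVerblunsky_eq_tailCoeff] at h
    exact_mod_cast h
  have hneg (k : ℕ) : L (T (-k)) = massPointMoment γ k := by
    refine eq_massPointMoment_of_recurrence hγ (g := fun k : ℕ => L (T (-k)))
      (by simpa using hL1) (fun t => ?_) k
    have h := hLbar (t + 1) (by omega)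
    rw [polyBarInv_eq_conjInvert, toLaurent_szego_massPoint hγ, map_sub, map_mul, map_sum,
      conjInvert_C, Complex.conj_ofReal, map_sub, linearMap_C_mul, smul_eq_mul, map_sum,
      sub_eq_zero, ← massPointVerblunsky_eq_tailCoeff] at h
    simpa using h
  obtain ⟨k, rfl | rfl⟩ := Int.eq_nat_or_neg m
  · exact hpos k
  · simpa [massPointMoment] using hneg k

theorem LaurentPolynomial.T_sub_C_mul_sum_mul_expand {R : Type*} [CommRing R] (b c : R) (n : ℤ)
    (r s : ℕ) :
    (T s - LaurentPolynomial.C b * ∑ k ∈ range s, T (k : ℤ)) *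
        (T (-n) * (T (-r) - LaurentPolynomial.C c * ∑ j ∈ range r, T (-(j : ℤ)))) =
      T (s - n - r) - LaurentPolynomial.C c * ∑ j ∈ range r, T (s - n - j)
        - LaurentPolynomial.C b * ∑ k ∈ range s, T (k - (n + r))
        + LaurentPolynomial.C (b * c) * ∑ k ∈ range s, ∑ j ∈ range r, T (k - n - j : ℤ) := by
  simp only [T_sub, neg_add, T_add, map_mul, mul_sub, sub_mul, mul_sum, sum_mul, sum_sub_distrib]
  rw [sum_comm (s := range r)]
  ring_nf

theorem sum_range_massPointMoment_sub_natCast (γ : ℝ) (a : ℤ) (m : ℕ) :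
    ∑ j ∈ range m, massPointMoment γ (a - j) =
      m * γ + if 0 ≤ a ∧ a < m then 1 - (γ : ℂ) else 0 := by
  have h (x : ℤ) : massPointMoment γ x = γ + if x = 0 then 1 - (γ : ℂ) else 0 := by
    unfold massPointMoment; split_ifs <;> ring
  simp only [h, sum_add_distrib, sum_const, card_range, nsmul_eq_mul, add_right_inj, sub_eq_zero]
  by_cases ha : 0 ≤ a
  · lift a to ℕ using ha
    simp [eq_comm (a := (a : ℤ))]
  · rw [if_neg (by omega)]
    exact sum_eq_zero fun j _ => if_neg (by omega)

theorem sum_range_massPointMoment_natCast_sub (γ : ℝ) (a : ℤ) (m : ℕ) :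
    ∑ k ∈ range m, massPointMoment γ (k - a) =
      m * γ + if 0 ≤ a ∧ a < m then 1 - (γ : ℂ) else 0 := by
  simp only [← massPointMoment_neg γ (_ - a), neg_sub, sum_range_massPointMoment_sub_natCast]

theorem sum_range_sum_range_massPointMoment (γ : ℝ) (n r s : ℕ) :
    ∑ k ∈ range s, ∑ j ∈ range r, massPointMoment γ (k - n - j) =
      s * r * γ + (min s (n + r) - n : ℕ) * (1 - (γ : ℂ)) := by
  have hfilter : (range s).filter (fun k : ℕ => 0 ≤ (k : ℤ) - n ∧ (k : ℤ) - n < r) =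
      Ico n (min s (n + r)) := by
    ext k; simp only [mem_filter, mem_range, mem_Ico]; omega
  simp only [sum_range_massPointMoment_sub_natCast, sum_add_distrib, sum_const, card_range,
    nsmul_eq_mul, ← sum_filter, hfilter, Nat.card_Ico]
  ring

/-- `⟨z^s - b ∑_{k<s} z^k, z^n (z^r - c ∑_{j<r} z^j)⟩` for the measure `(1-γ)·dθ/2π + γ·δ_1`:
the point mass contributes `γ (1 - rc)(1 - sb)`, the product of the values at `z = 1`, and the
Lebesgue part pairs equal exponents. -/
def massPointInner (γ b c : ℝ) (n r s : ℕ) : ℝ :=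
  γ * (1 - r * c) * (1 - s * b) + (1 - γ) *
    ((if s = n + r then 1 else 0) - c * (if n ≤ s ∧ s < n + r then 1 else 0)
      - b * (if n + r < s then 1 else 0) + b * c * (min s (n + r) - n : ℕ))

theorem map_mul_conjInvert_eq_massPointInner {γ : ℝ} (L : LaurentPolynomial ℂ →ₗ[ℂ] ℂ)
    (hLT : ∀ m : ℤ, L (T m) = massPointMoment γ m) (b c : ℝ) (n r s : ℕ) :
    L ((T s - LaurentPolynomial.C (b : ℂ) * ∑ k ∈ range s, T k) *
        conjInvert (T n * (T r - LaurentPolynomial.C (c : ℂ) * ∑ j ∈ range r, T j))) =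
      massPointInner γ b c n r s := by
  simp only [map_mul, map_sub, map_sum, conjInvert_T, conjInvert_C, Complex.conj_ofReal]
  rw [T_sub_C_mul_sum_mul_expand]
  simp only [map_add, map_sub, linearMap_C_mul, smul_eq_mul, map_sum, hLT]
  rw [sum_range_sum_range_massPointMoment, sum_range_massPointMoment_sub_natCast,
    sum_range_massPointMoment_natCast_sub, massPointMoment, massPointInner]
  split_ifs <;> first | (exfalso; omega) | (push_cast; ring)

-- Stated with `γ * (s - 1)`, the normal form in which `field_simp` looks for nonzero denominators.
theorem one_add_mul_sub_one_pos {γ : ℝ} (hγ0 : 0 ≤ γ) (hγ1 : γ < 1) (s : ℕ) :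
    0 < 1 + γ * ((s : ℝ) - 1) := by
  nlinarith [(Nat.cast_nonneg s : (0 : ℝ) ≤ s)]

theorem prod_one_sub_normSq_massPointVerblunsky {γ : ℝ} (hγ0 : 0 ≤ γ) (hγ1 : γ < 1) (s : ℕ) :
    ∏ j ∈ range s, (1 - Complex.normSq (massPointVerblunsky γ j)) =
      (1 - γ) * (1 + s * γ) / (1 + (s - 1) * γ) := by
  induction s with
  | zero =>
    have : 1 - γ ≠ 0 := by linarith
    simp [← sub_eq_add_neg, this]
  | succ s ih =>
    have h₁ : 1 + γ * s ≠ 0 := by positivity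
    have h₂ := (one_add_mul_sub_one_pos hγ0 hγ1 s).ne'
    rw [prod_range_succ, ih, massPointVerblunsky, Complex.normSq_ofReal]
    push_cast [add_sub_cancel_right]
    field_simp
    ring

def massPointGenMom (γ : ℝ) (n r s : ℕ) : ℝ :=
  massPointInner γ (tailCoeff γ s) (tailCoeff γ r) n r s /
    ((1 - γ) * (1 + s * γ) / (1 + (s - 1) * γ))

theorem genMom_massPoint {γ : ℝ} (hγ0 : 0 ≤ γ) (hγ1 : γ < 1) (L : LaurentPolynomial ℂ →ₗ[ℂ] ℂ)
    (hLT : ∀ m : ℤ, L (T m) = massPointMoment γ m) (n r s : ℕ) :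
    genMom L (massPointVerblunsky γ) n r s = massPointGenMom γ n r s := by
  rw [genMom, laurentBarInv_eq_conjInvert, toLaurent_szego_massPoint hγ0,
    toLaurent_szego_massPoint hγ0, map_mul_conjInvert_eq_massPointInner L hLT,
    ← Complex.ofReal_prod, prod_one_sub_normSq_massPointVerblunsky hγ0 hγ1, ← Complex.ofReal_div]
  rfl

theorem massPointGenMom_of_add_le {γ : ℝ} (hγ0 : 0 ≤ γ) (hγ1 : γ < 1) {n r s : ℕ}
    (h : n + r ≤ s) : massPointGenMom γ n r s = if n + r = s then 1 else 0 := by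
  have hs := (one_add_mul_sub_one_pos hγ0 hγ1 s).ne'
  have hr := (one_add_mul_sub_one_pos hγ0 hγ1 r).ne'
  have h₁ : 1 + γ * s ≠ 0 := by positivity
  have h₂ : 1 - γ ≠ 0 := by linarith
  rw [massPointGenMom, massPointInner, min_eq_right h, add_tsub_cancel_left]
  simp only [tailCoeff]
  rcases h.eq_or_lt with heq | hlt
  · rw [if_pos heq.symm, if_neg (by omega), if_neg (by omega), if_pos heq]
    field_simp
    ring
  · rw [if_neg hlt.ne', if_neg (by omega), if_pos hlt, if_neg hlt.ne]
    field_simp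
    ring

theorem massPointGenMom_of_le_of_lt {γ : ℝ} (hγ0 : 0 ≤ γ) (hγ1 : γ < 1) {n r s : ℕ}
    (hns : n ≤ s) (hs : s < n + r) :
    massPointGenMom γ n r s = -(n * γ ^ 2) / ((1 + (r - 1) * γ) * (1 + s * γ)) := by
  have hs' := (one_add_mul_sub_one_pos hγ0 hγ1 s).ne'
  have hr := (one_add_mul_sub_one_pos hγ0 hγ1 r).ne'
  have h₁ : 1 + γ * s ≠ 0 := by positivity
  have h₂ : 1 - γ ≠ 0 := by linarith
  rw [massPointGenMom, massPointInner, min_eq_left hs.le, if_neg hs.ne, if_pos ⟨hns, hs⟩,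
    if_neg (by omega), Nat.cast_sub hns]
  simp only [tailCoeff]
  field_simp
  ring

theorem massPointGenMom_of_lt {γ : ℝ} (hγ0 : 0 ≤ γ) (hγ1 : γ < 1) {n r s : ℕ} (h : s < n) :
    massPointGenMom γ n r s = (1 - γ) * γ / ((1 + (r - 1) * γ) * (1 + s * γ)) := by
  have hs := (one_add_mul_sub_one_pos hγ0 hγ1 s).ne'
  have hr := (one_add_mul_sub_one_pos hγ0 hγ1 r).ne'
  have h₁ : 1 + γ * s ≠ 0 := by positivity
  have h₂ : 1 - γ ≠ 0 := by linarith
  rw [massPointGenMom, massPointInner, if_neg (by omega), if_neg (by omega), if_neg (by omega),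
    Nat.sub_eq_zero_of_le ((min_le_left _ _).trans h.le)]
  simp only [tailCoeff]
  field_simp
  ring

/-- single inserted mass point, generalized moments: with
`α_n = γ/(1+nγ)`, `γ ∈ (0,1)`, and `r > 0`, the generalized moments `μ_{n,r,s}` are
given by the stated three-case formula. -/
theorem single_mass_point_genMom (γ : ℝ) (hγ0 : 0 < γ) (hγ1 : γ < 1) (α : ℕ → ℂ)
    (hαdef : α = fun n : ℕ => ((γ / (1 + n * γ) : ℝ) : ℂ))
    (L : LaurentPolynomial ℂ →ₗ[ℂ] ℂ) (hL1 : L 1 = 1)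
    (hLphi : ∀ k : ℕ, 1 ≤ k → L (Polynomial.toLaurent (szego α k)) = 0)
    (hLbar : ∀ k : ℕ, 1 ≤ k → L (polyBarInv (szego α k)) = 0) :
    ∀ n r s : ℕ, 0 < r →
      (n + r ≤ s → genMom L α n r s = if n + r = s then 1 else 0) ∧
      ((n : ℤ) - 1 < (s : ℤ) ∧ (s : ℤ) < (n : ℤ) + (r : ℤ) →
        genMom L α n r s =
          ((-(n * γ ^ 2) / ((1 + ((r : ℝ) - 1) * γ) * (1 + s * γ)) : ℝ) : ℂ)) ∧
      ((s : ℤ) ≤ (n : ℤ) - 1 →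
        genMom L α n r s =
          (((1 - γ) * γ / ((1 + ((r : ℝ) - 1) * γ) * (1 + s * γ)) : ℝ) : ℂ)) := by
  intro n r s _
  obtain rfl : α = massPointVerblunsky γ := hαdef
  have hLT := map_T_eq_massPointMoment hγ0.le L hL1 hLphi hLbar
  simp only [genMom_massPoint hγ0.le hγ1 L hLT]
  refine ⟨fun h => ?_, fun h => ?_, fun h => ?_⟩
  · rw [massPointGenMom_of_add_le hγ0.le hγ1 h]
    split_ifs <;> simp
  · rw [massPointGenMom_of_le_of_lt hγ0.le hγ1 (by omega) (by omega)]
  · rw [massPointGenMom_of_lt hγ0.le hγ1 (by omega)]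

end
end

section
/- (Single nontrivial moment, 0 < a < 1.) Let a ∈ (0,1), set u = a^{-1} + √(a^{-2}-1) (a real number with u > 1), and set α_n = -(u-u^{-1})/(u^{n+2}-u^{-(n+2)}) for all n ≥ 0 (one has |α_n| < 1). Then for all nonnegative integers n and m: μ_{n,m} = 1 if m = n; μ_{n,m} = -(u^n-u^{-n})/(u^{n+1}-u^{-(n+1)}) if m = n-1; and μ_{n,m} = 0 otherwise. -/
open Polynomial LaurentPolynomial Finset

noncomputable section

/-!
Write `S k = u ^ k - u ^ (-k)`, so that `α n = -S 1 / S (n + 2)`. Szegő's recurrence then gives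
`Φ m = ∑_{j ≤ m} S (j + 1) z ^ j / S (m + 1)`, and because
`S 1 * (S (k - 1) + S (k + 1)) = S 2 * S k`, the product of `Φ m` with
`w = 1 - (S 1 / S 2) (z + z⁻¹)` telescopes to three monomials, in `z⁻¹`, `z ^ m` and
`z ^ (m + 1)`.
Hence the functional "constant term of `w * p`" kills every `Φ k` and `Φ̄ k (1 / z)` with
`k ≥ 1`; as the `Φ k` are monic of degree `k`, it is `L`. The moment `μ n m` is then the
coefficient of `z ^ n` in `w * Φ m`, divided by
`∏_{j < m} (1 - |α j| ^ 2) = S 1 * S (m + 2) / (S 2 * S (m + 1))`.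
-/

namespace LaurentPolynomial

variable {R : Type*}

lemma coeff_mul_T [Semiring R] (p : R[T;T⁻¹]) (k n : ℤ) :
    (p * T k).coeff n = p.coeff (n - k) := by
  rw [T, AddMonoidAlgebra.coeff_mul_single_apply, mul_one, sub_eq_add_neg]

lemma coeff_C_mul [Semiring R] (a : R) (p : R[T;T⁻¹]) (n : ℤ) :
    (C a * p).coeff n = a * p.coeff n := by
  rw [← single_eq_C, AddMonoidAlgebra.coeff_single_mul_apply, neg_zero, zero_add]

lemma _root_.Polynomial.toLaurent_eq_sum [Semiring R] (p : R[X]) :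
    toLaurent p = ∑ i ∈ range (p.natDegree + 1), C (p.coeff i) * T i := by
  conv_lhs => rw [p.as_sum_range_C_mul_X_pow]
  simp only [map_sum, toLaurent_C_mul_X_pow]

lemma linearMap_eq_on_T_natCast_of_monic [CommRing R] {M : Type*} [AddCommGroup M] [Module R M]
    {f g : R[T;T⁻¹] →ₗ[R] M} (P : ℕ → R[X]) (hmonic : ∀ k, (P k).Monic)
    (hdeg : ∀ k, (P k).natDegree = k) (hP : ∀ k, f (toLaurent (P k)) = g (toLaurent (P k)))
    (k : ℕ) : f (T k) = g (T k) := by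
  induction k using Nat.strong_induction_on with
  | _ k ih =>
  have hsplit : T k + ∑ i ∈ range k, (P k).coeff i • T (i : ℤ) = toLaurent (P k) := by
    conv_rhs => rw [(hmonic k).as_sum, hdeg k]
    simp only [map_add, map_sum, toLaurent_X_pow, toLaurent_C_mul_X_pow, smul_eq_C_mul]
  rw [eq_sub_of_add_eq hsplit, map_sub, map_sub, hP, map_sum, map_sum]
  congr 1
  refine sum_congr rfl fun i hi => ?_
  rw [map_smul, map_smul, ih i (mem_range.1 hi)]

lemma linearMap_ext_of_monic [CommRing R] {M : Type*} [AddCommGroup M] [Module R M]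
    {f g : R[T;T⁻¹] →ₗ[R] M} (P : ℕ → R[X]) (hmonic : ∀ k, (P k).Monic)
    (hdeg : ∀ k, (P k).natDegree = k) (hP : ∀ k, f (toLaurent (P k)) = g (toLaurent (P k)))
    (hPinv : ∀ k, f (invert (toLaurent (P k))) = g (invert (toLaurent (P k)))) : f = g := by
  have hT : ∀ n : ℤ, f (T n) = g (T n) := by
    intro n
    obtain ⟨k, rfl | rfl⟩ := Int.eq_nat_or_neg n
    · exact linearMap_eq_on_T_natCast_of_monic P hmonic hdeg hP k
    · simpa using linearMap_eq_on_T_natCast_of_monic (f := f ∘ₗ invert.toLinearMap)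
        (g := g ∘ₗ invert.toLinearMap) P hmonic hdeg hPinv k
  ext n
  exact hT n

end LaurentPolynomial

lemma szego_monic_and_natDegree (α : ℕ → ℂ) (n : ℕ) :
    (szego α n).Monic ∧ (szego α n).natDegree = n := by
  induction n with
  | zero => exact ⟨monic_one, natDegree_one⟩
  | succ n ih =>
    obtain ⟨hmonic, hdeg⟩ := ih
    have hlead : (X * szego α n).Monic ∧ (X * szego α n).natDegree = n + 1 :=
      ⟨monic_X.mul hmonic, by rw [(monic_X.natDegree_mul hmonic), natDegree_X, hdeg, add_comm]⟩
    have hrefl : (Polynomial.C ((starRingEnd ℂ) (α n)) *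
        reflect n ((szego α n).map (starRingEnd ℂ))).natDegree < n + 1 := by
      refine lt_of_le_of_lt (natDegree_C_mul_le _ _) (Nat.lt_succ_of_le ?_)
      refine natDegree_reflect_le.trans (max_le le_rfl ?_)
      exact (natDegree_map_le).trans hdeg.le
    rw [← hlead.2] at hrefl
    exact ⟨hlead.1.sub_of_left (degree_lt_degree hrefl),
      (natDegree_sub_eq_left_of_natDegree_lt hrefl).trans hlead.2⟩

lemma laurentBarInv_T (n : ℤ) : laurentBarInv (T n) = T (-n) := by
  rw [laurentBarInv, T, AddMonoidAlgebra.coeff_single, Finsupp.sum_single_index (by simp)]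
  simp

lemma polyBarInv_eq_invert (p : ℂ[X]) :
    polyBarInv p = invert (toLaurent (p.map (starRingEnd ℂ))) := by
  induction p using Polynomial.induction_on' with
  | add p q hp hq =>
    rw [Polynomial.map_add, map_add, map_add, ← hp, ← hq, polyBarInv, polyBarInv, polyBarInv,
      Polynomial.sum_add_index _ _ _ (fun _ => by simp)
        (fun _ _ _ => by rw [map_add, map_add, add_mul])]
  | monomial n c =>
    rw [polyBarInv, sum_monomial_index _ _ (by simp), Polynomial.map_monomial, toLaurent_C_mul_T,
      map_mul, invert_C, invert_T]

namespace SingleMoment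

def S (u : ℝ) (k : ℤ) : ℝ := u ^ k - u ^ (-k)

variable {u : ℝ}

@[simp] lemma S_zero : S u 0 = 0 := by simp [S]

lemma S_pos (hu : 1 < u) {k : ℤ} (hk : 0 < k) : 0 < S u k :=
  sub_pos.2 (zpow_lt_zpow_right₀ hu (by omega))

lemma S_mul_S_add_S_one_mul_S (hu : u ≠ 0) (j d : ℤ) :
    S u j * S u (j + d + 1) + S u 1 * S u d = S u (j + 1) * S u (j + d) := by
  simp only [S, neg_add, zpow_add₀ hu, zpow_neg, zpow_one]
  field_simp
  ring

def verblunsky (u : ℝ) (n : ℕ) : ℂ := ((-(S u 1 / S u (n + 2)) : ℝ) : ℂ)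

lemma coeff_szego (hu : 1 < u) (m j : ℕ) :
    (szego (verblunsky u) m).coeff j =
      ((if j ≤ m then S u (j + 1) / S u (m + 1) else 0 : ℝ) : ℂ) := by
  induction m generalizing j with
  | zero =>
    rcases j with _ | j
    · simp [szego, (S_pos hu one_pos).ne']
    · simp [szego, coeff_one]
  | succ m ih =>
    have hm1 := (S_pos hu (by omega : (0 : ℤ) < m + 1)).ne'
    have hm2 := (S_pos hu (by omega : (0 : ℤ) < m + 2)).ne'
    have hX : (X * szego (verblunsky u) m).coeff j =
        ((if j ≤ m + 1 then S u j / S u (m + 1) else 0 : ℝ) : ℂ) := by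
      rcases j with _ | j
      · simp
      · rw [coeff_X_mul, ih]
        simp only [Nat.cast_add, Nat.cast_one, Nat.add_le_add_iff_right]
    have hrefl : (reflect m ((szego (verblunsky u) m).map (starRingEnd ℂ))).coeff j
        = ((if j ≤ m + 1 then S u (m + 1 - j) / S u (m + 1) else 0 : ℝ) : ℂ) := by
      rw [coeff_reflect, coeff_map, ih, Complex.conj_ofReal]
      rcases lt_trichotomy j (m + 1) with hj | rfl | hj
      · rw [revAt_le (by omega), if_pos (by omega), if_pos hj.le, Nat.cast_sub (by omega)]
        push_cast; ring_nf
      · rw [revAt_eq_self_of_lt (by omega), if_neg (by omega), if_pos le_rfl]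
        simp
      · rw [revAt_eq_self_of_lt (by omega), if_neg (by omega), if_neg (by omega)]
    rw [szego, coeff_sub, Polynomial.coeff_C_mul, hX, hrefl, verblunsky, Complex.conj_ofReal]
    split_ifs with hj
    · have key := S_mul_S_add_S_one_mul_S (u := u) (by linarith) j (m + 1 - j)
      rw [show (j : ℤ) + (m + 1 - j) + 1 = m + 2 by ring,
        show (j : ℤ) + (m + 1 - j) = m + 1 by ring] at key
      have hcoeff : S u j / S u (m + 1) - -(S u 1 / S u (m + 2)) * (S u (m + 1 - j) / S u (m + 1))
          = S u (j + 1) / S u (m + 1 + 1) := by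
        rw [add_assoc, one_add_one_eq_two]
        field_simp
        linear_combination key
      exact_mod_cast hcoeff
    · simp

lemma map_conj_szego (hu : 1 < u) (m : ℕ) :
    (szego (verblunsky u) m).map (starRingEnd ℂ) = szego (verblunsky u) m := by
  ext j
  rw [coeff_map, coeff_szego hu, Complex.conj_ofReal]

def scaledSzego (u : ℝ) (m : ℕ) : ℂ[T;T⁻¹] :=
  ∑ j ∈ range (m + 1), LaurentPolynomial.C (S u (j + 1) : ℂ) * T j

lemma toLaurent_szego (hu : 1 < u) (m : ℕ) :
    toLaurent (szego (verblunsky u) m) =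
      LaurentPolynomial.C ((S u (m + 1) : ℂ)⁻¹) * scaledSzego u m := by
  rw [toLaurent_eq_sum, (szego_monic_and_natDegree _ m).2, scaledSzego, mul_sum]
  refine sum_congr rfl fun j hj => ?_
  rw [coeff_szego hu, if_pos (Nat.lt_succ_iff.1 (mem_range.1 hj)), ← mul_assoc, ← map_mul]
  push_cast
  ring_nf

def weight (u : ℝ) : ℂ[T;T⁻¹] :=
  1 - LaurentPolynomial.C ((S u 1 / S u 2 : ℝ) : ℂ) * (T 1 + T (-1))

lemma weight_mul_scaledSzego (hu : 1 < u) (m : ℕ) :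
    weight u * scaledSzego u m = LaurentPolynomial.C ((S u 1 / S u 2 : ℝ) : ℂ) *
      (LaurentPolynomial.C (S u (m + 2) : ℂ) * T m
        - LaurentPolynomial.C (S u (m + 1) : ℂ) * T (m + 1)
        - LaurentPolynomial.C (S u 1 : ℂ) * T (-1)) := by
  have hS2 := (S_pos hu two_pos).ne'
  induction m with
  | zero =>
    have hscal : LaurentPolynomial.C (S u 1 : ℂ)
        = LaurentPolynomial.C ((S u 1 / S u 2 : ℝ) : ℂ) *
          LaurentPolynomial.C (S u 2 : ℂ) := by
      rw [← map_mul, ← Complex.ofReal_mul, div_mul_cancel₀ _ hS2]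
    simp only [scaledSzego, weight, zero_add, sum_range_one, Nat.cast_zero, T_zero, mul_one]
    linear_combination (1 : ℂ[T;T⁻¹]) * hscal
  | succ m ih =>
    have key := S_mul_S_add_S_one_mul_S (u := u) (by linarith) 1 (m + 1)
    rw [show (1 : ℤ) + (m + 1) + 1 = m + 3 by ring, show (1 : ℤ) + (m + 1) = m + 2 by ring,
      one_add_one_eq_two] at key
    have hscal : LaurentPolynomial.C (S u (m + 2) : ℂ) =
        LaurentPolynomial.C ((S u 1 / S u 2 : ℝ) : ℂ) *
          (LaurentPolynomial.C (S u (m + 1) : ℂ) + LaurentPolynomial.C (S u (m + 3) : ℂ)) := by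
      rw [← map_add, ← map_mul, ← Complex.ofReal_add, ← Complex.ofReal_mul]
      congr 2
      field_simp
      linear_combination -key
    rw [scaledSzego, sum_range_succ, ← scaledSzego, mul_add, ih]
    simp only [Nat.cast_add, Nat.cast_one]
    have hT2 : (T ((m : ℤ) + 2) : ℂ[T;T⁻¹]) = T 1 * T (m + 1) := by rw [← T_add]; ring_nf
    have hT0 : (T (m : ℤ) : ℂ[T;T⁻¹]) = T (-1) * T (m + 1) := by rw [← T_add]; ring_nf
    rw [show (m : ℤ) + 1 + 2 = m + 3 by ring, show (m : ℤ) + 1 + 1 = m + 2 by ring, hT2, hT0,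
      weight]
    linear_combination T ((m : ℤ) + 1) * hscal

-- Its moments are `1` at `z ^ 0`, `-S 1 / S 2` at `z ^ (±1)` and `0` elsewhere.
def momentFunctional (u : ℝ) : ℂ[T;T⁻¹] →ₗ[ℂ] ℂ where
  toFun p := (weight u * p).coeff 0
  map_add' p q := by rw [mul_add, AddMonoidAlgebra.coeff_add, Finsupp.add_apply]
  map_smul' c p := by
    rw [mul_smul_comm, AddMonoidAlgebra.coeff_smul, Finsupp.smul_apply, RingHom.id_apply,
      smul_eq_mul]

lemma momentFunctional_apply (p : ℂ[T;T⁻¹]) :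
    momentFunctional u p = (weight u * p).coeff 0 := rfl

lemma momentFunctional_one : momentFunctional u 1 = 1 := by
  simp [momentFunctional_apply, weight, LaurentPolynomial.coeff_C_mul]

lemma momentFunctional_invert (p : ℂ[T;T⁻¹]) :
    momentFunctional u (invert p) = momentFunctional u p := by
  have hw : invert (weight u) = weight u := by simp [weight, add_comm]
  rw [momentFunctional_apply, momentFunctional_apply, ← neg_zero, ← invert_apply, map_mul, hw,
    involutive_invert p, neg_zero]

lemma momentFunctional_mul_T_neg (p : ℂ[T;T⁻¹]) (n : ℤ) :
    momentFunctional u (p * T (-n)) = (weight u * p).coeff n := by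
  rw [momentFunctional_apply, ← mul_assoc, coeff_mul_T, zero_sub, neg_neg]

lemma coeff_weight_mul_toLaurent_szego (hu : 1 < u)  (m n : ℕ) :
    (weight u * toLaurent (szego (verblunsky u) m)).coeff n = ((S u 1 / (S u 2 * S u (m + 1)) *
      (if n = m then S u (m + 2) else if n = m + 1 then -S u (m + 1) else 0) : ℝ) : ℂ) := by
  rw [toLaurent_szego hu, mul_left_comm, weight_mul_scaledSzego hu]
  have hm1 := (S_pos hu (by omega : (0 : ℤ) < m + 1)).ne'
  have hT0 : ((m : ℤ) = n) ↔ n = m := by omega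
  have hT1 : ((m : ℤ) + 1 = n) ↔ n = m + 1 := by omega
  have hT_neg : (-1 : ℤ) ≠ n := by omega
  simp only [LaurentPolynomial.coeff_C_mul, AddMonoidAlgebra.coeff_sub, Finsupp.sub_apply, T_apply,
    hT0, hT1, if_neg hT_neg, mul_zero, sub_zero]
  split_ifs with h h' <;> push_cast
  · omega
  · field_simp; ring
  · field_simp; ring
  · simp

lemma eq_momentFunctional (hu : 1 < u) {L : ℂ[T;T⁻¹] →ₗ[ℂ] ℂ} (hL1 : L 1 = 1)
    (hLphi : ∀ k : ℕ, 1 ≤ k → L (toLaurent (szego (verblunsky u) k)) = 0)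
    (hLbar : ∀ k : ℕ, 1 ≤ k → L (polyBarInv (szego (verblunsky u) k)) = 0) :
    L = momentFunctional u := by
  have hM : ∀ k, 1 ≤ k → momentFunctional u (toLaurent (szego (verblunsky u) k)) = 0 :=
      fun k hk => by
    rw [momentFunctional_apply, ← Nat.cast_zero, coeff_weight_mul_toLaurent_szego hu,
      if_neg (by omega), if_neg (by omega), mul_zero, Complex.ofReal_zero]
  have hP : ∀ k, L (toLaurent (szego (verblunsky u) k)) =
      momentFunctional u (toLaurent (szego (verblunsky u) k)) := by
    rintro (_ | k)
    · rw [szego, map_one, hL1, momentFunctional_one]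
    · rw [hLphi _ (by omega), hM _ (by omega)]
  refine linearMap_ext_of_monic (szego (verblunsky u)) (fun k => (szego_monic_and_natDegree _ k).1)
    (fun k => (szego_monic_and_natDegree _ k).2) hP fun k => ?_
  rw [momentFunctional_invert, ← hP]
  rcases k with _ | k
  · rw [szego, map_one, map_one]
  · rw [← map_conj_szego hu, ← polyBarInv_eq_invert, hLbar _ (by omega), map_conj_szego hu,
      hLphi _ (by omega)]

lemma prod_one_sub_normSq (hu : 1 < u) (m : ℕ) :
    ∏ j ∈ range m, (1 - Complex.normSq (verblunsky u j))
      = S u 1 * S u (m + 2) / (S u 2 * S u (m + 1)) := by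
  have hS1 := (S_pos hu one_pos).ne'
  have hS2 := (S_pos hu two_pos).ne'
  induction m with
  | zero => simp [field]
  | succ m ih =>
    have hm1 := (S_pos hu (by omega : (0 : ℤ) < m + 1)).ne'
    have hm2 := (S_pos hu (by omega : (0 : ℤ) < m + 2)).ne'
    have key := S_mul_S_add_S_one_mul_S (u := u) (by linarith) (m + 1) 1
    rw [prod_range_succ, ih, verblunsky, Complex.normSq_ofReal]
    push_cast
    rw [show (m : ℤ) + 1 + 2 = m + 3 by ring, show (m : ℤ) + 1 + 1 = m + 2 by ring]
    rw [show (m : ℤ) + 1 + 1 + 1 = m + 3 by ring, show (m : ℤ) + 1 + 1 = m + 2 by ring] at key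
    field_simp
    linear_combination -key

lemma genMom_momentFunctional (hu : 1 < u) (n m : ℕ) :
    genMom (momentFunctional u) (verblunsky u) n 0 m =
      if m = n then 1
      else if (m : ℤ) = n - 1 then ((-(S u n / S u (n + 1)) : ℝ) : ℂ) else 0 := by
  have hS1 := (S_pos hu one_pos).ne'
  have hS2 := (S_pos hu two_pos).ne'
  have hm1 := (S_pos hu (by omega : (0 : ℤ) < m + 1)).ne'
  have hm2 := (S_pos hu (by omega : (0 : ℤ) < m + 2)).ne'
  rw [genMom, szego, map_one, mul_one, laurentBarInv_T, momentFunctional_mul_T_neg,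
    coeff_weight_mul_toLaurent_szego hu, ← Complex.ofReal_prod, prod_one_sub_normSq hu,
    ← Complex.ofReal_div]
  rcases eq_or_ne n m with rfl | hnm
  · rw [if_pos rfl, if_pos rfl, Complex.ofReal_eq_one]
    field_simp
  rcases eq_or_ne n (m + 1) with rfl | hnm1
  · rw [if_neg hnm, if_pos rfl, if_neg (by omega), if_pos (by push_cast; ring), Complex.ofReal_inj]
    push_cast
    rw [add_assoc, one_add_one_eq_two]
    field_simp
  · rw [if_neg hnm, if_neg hnm1, if_neg hnm.symm, if_neg (by omega)]
    simp

end SingleMoment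

open SingleMoment in
/-- single nontrivial moment, `0 < a < 1`: with
`u = a⁻¹ + √(a⁻² - 1)` and `α_n = -(u-u⁻¹)/(u^{n+2}-u^{-(n+2)})`, the moments are
`μ_{n,n} = 1`, `μ_{n,n-1} = -(uⁿ-u⁻ⁿ)/(u^{n+1}-u^{-(n+1)})`, and `μ_{n,m} = 0`
otherwise. -/
theorem single_nontrivial_moment (a u : ℝ) (ha0 : 0 < a) (ha1 : a < 1)
    (hu : u = a⁻¹ + Real.sqrt (a⁻¹ ^ 2 - 1)) (α : ℕ → ℂ)
    (hαdef : α = fun n : ℕ =>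
      ((-((u - u⁻¹) / (u ^ ((n : ℤ) + 2) - u ^ (-((n : ℤ) + 2)))) : ℝ) : ℂ))
    (L : LaurentPolynomial ℂ →ₗ[ℂ] ℂ) (hL1 : L 1 = 1)
    (hLphi : ∀ k : ℕ, 1 ≤ k → L (Polynomial.toLaurent (szego α k)) = 0)
    (hLbar : ∀ k : ℕ, 1 ≤ k → L (polyBarInv (szego α k)) = 0) :
    ∀ n m : ℕ,
      genMom L α n 0 m =
        if m = n then 1
        else if (m : ℤ) = (n : ℤ) - 1 then
          ((-((u ^ (n : ℤ) - u ^ (-(n : ℤ))) /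
              (u ^ ((n : ℤ) + 1) - u ^ (-((n : ℤ) + 1)))) : ℝ) : ℂ)
        else 0 := by
  have hu1 : 1 < u := by
    have := (one_lt_inv₀ ha0).2 ha1
    rw [hu]
    linarith [Real.sqrt_nonneg (a⁻¹ ^ 2 - 1)]
  obtain rfl : α = verblunsky u := by
    funext n
    simp only [hαdef, verblunsky, S, zpow_one, zpow_neg_one]
  intro n m
  rw [eq_momentFunctional hu1 hL1 hLphi hLbar]
  exact genMom_momentFunctional hu1 n m

end
end

section
/- Define ν_{n,r,s} = ⟨Φ_s(z), z^n·Φ_r^*(z)⟩ / ⟨Φ_s(z), Φ_s(z)⟩ (the conjugate of the coefficient of Φ_s in the expansion of z^n·Φ_r^*(z) in the basis {Φ_k}). Then for all nonnegative integers n, r, and s with α_r ≠ 0, ν_{n,r,s} = α_r^{-1} · Σ_p wt_L(p), where the sum is over all Łukasiewicz paths p from (-1,r) to (n,s) whose first step is not an up-step (1,1). -/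
open Polynomial LaurentPolynomial Finset

noncomputable section

/-!
The generalized moments `μ_{n,c,s} = ⟨Φ_s, zⁿ Φ_c⟩ / ⟨Φ_s, Φ_s⟩` satisfy `μ_{0,c,s} = δ_{cs}` by
orthogonality. Writing `Φ_c^* = ∑_{j ≤ c} c_{c,j} Φ_j` with `c_{c,j} = -α_{j-1} ∏_{i=j}^{c-1} ρ_i²`
(`starCoeff`), the identity `z Φ_c = Φ_{c+1} + conj(α_c) Φ_c^*` gives the recursion
`μ_{n+1,c,s} = μ_{n,c+1,s} + ∑_{j ≤ c} α_c conj(c_{c,j}) μ_{n,j,s}`. Here `α_c conj(c_{c,j})` is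
the Łukasiewicz weight of a step from height `c` down to height `j`, so `μ_{n,c,s}` is the weighted
sum over Łukasiewicz paths from `(0,c)` to `(n,s)`. Finally, Szegő's recurrence gives
`α_r ν_{n,r,s} = μ_{n+1,r,s} - μ_{n,r+1,s}`: the sum over all paths from `(-1,r)` to `(n,s)` minus
those whose first step is an up-step.
-/

namespace OPUC

section ConjInvert

/-- `f(z) ↦ f̄(1/z)`. -/
def conjInvert : LaurentPolynomial ℂ →+* LaurentPolynomial ℂ :=
  (invert : LaurentPolynomial ℂ ≃ₐ[ℂ] _).toRingHom.comp
    (AddMonoidAlgebra.mapRingHom ℤ (starRingEnd ℂ))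

theorem conjInvert_C_mul_T (a : ℂ) (n : ℤ) :
    conjInvert (LaurentPolynomial.C a * T n) =
      LaurentPolynomial.C (starRingEnd ℂ a) * T (-n) := by
  rw [← single_eq_C_mul_T, ← single_eq_C_mul_T]
  simp only [conjInvert, RingHom.comp_apply, AddMonoidAlgebra.mapRingHom_single]
  rw [single_eq_C_mul_T, single_eq_C_mul_T]
  simp

theorem conjInvert_C (a : ℂ) :
    conjInvert (LaurentPolynomial.C a) = LaurentPolynomial.C (starRingEnd ℂ a) := by
  simpa using conjInvert_C_mul_T a 0

theorem conjInvert_T (n : ℤ) : conjInvert (T n) = T (-n) := by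
  simpa using conjInvert_C_mul_T 1 n

theorem conjInvert_conjInvert (f : LaurentPolynomial ℂ) : conjInvert (conjInvert f) = f := by
  induction f using LaurentPolynomial.induction_on' with
  | add p q hp hq => rw [map_add, map_add, hp, hq]
  | C_mul_T n a => rw [conjInvert_C_mul_T, conjInvert_C_mul_T, Complex.conj_conj, neg_neg]

theorem laurentBarInv_add_s19 (f g : LaurentPolynomial ℂ) :
    laurentBarInv (f + g) = laurentBarInv f + laurentBarInv g := by
  unfold laurentBarInv
  rw [AddMonoidAlgebra.coeff_add]
  apply Finsupp.sum_add_index <;> intros <;> simp [add_mul]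

theorem laurentBarInv_C_mul_T (a : ℂ) (n : ℤ) :
    laurentBarInv (LaurentPolynomial.C a * T n) =
      LaurentPolynomial.C (starRingEnd ℂ a) * T (-n) := by
  rw [← single_eq_C_mul_T]
  unfold laurentBarInv
  rw [AddMonoidAlgebra.coeff_single, Finsupp.sum_single_index]
  simp

theorem laurentBarInv_eq_conjInvert (f : LaurentPolynomial ℂ) :
    laurentBarInv f = conjInvert f := by
  induction f using LaurentPolynomial.induction_on' with
  | add p q hp hq => rw [laurentBarInv_add_s19, hp, hq, map_add]
  | C_mul_T n a => rw [laurentBarInv_C_mul_T, conjInvert_C_mul_T]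

theorem conjInvert_toLaurent (p : ℂ[X]) :
    conjInvert (toLaurent p) = invert (toLaurent (p.map (starRingEnd ℂ))) := by
  induction p using Polynomial.induction_on' with
  | add p q hp hq => simp only [map_add, Polynomial.map_add, hp, hq]
  | monomial n a =>
    rw [toLaurent_C_mul_T, Polynomial.map_monomial, toLaurent_C_mul_T, conjInvert_C_mul_T]
    simp

theorem polyBarInv_eq_conjInvert (p : ℂ[X]) : polyBarInv p = conjInvert (toLaurent p) := by
  conv_rhs => rw [← p.sum_monomial_eq]
  simp only [polyBarInv, Polynomial.sum, map_sum, toLaurent_C_mul_T, conjInvert_C_mul_T]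

end ConjInvert

theorem toLaurent_eq_sum_range {R : Type*} [Semiring R] {p : R[X]} {m : ℕ}
    (hp : p.natDegree < m) :
    toLaurent p = ∑ k ∈ range m, LaurentPolynomial.C (p.coeff k) * T k := by
  conv_lhs => rw [p.as_sum_range' m hp]
  simp only [map_sum, toLaurent_C_mul_T]

theorem conjInvert_toLaurent_eq_sum {p : ℂ[X]} {m : ℕ} (hp : p.natDegree < m) :
    conjInvert (toLaurent p) =
      ∑ k ∈ range m, LaurentPolynomial.C (starRingEnd ℂ (p.coeff k)) * T (-k) := by
  simp only [toLaurent_eq_sum_range hp, map_sum, conjInvert_C_mul_T]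

theorem T_mul_T_mul {R : Type*} [Semiring R] (m n : ℤ) (f : R[T;T⁻¹]) :
    T m * (T n * f) = T (m + n) * f := by
  rw [← mul_assoc, ← T_add]

theorem map_C_mul {R : Type*} [CommSemiring R] (L : R[T;T⁻¹] →ₗ[R] R) (a : R) (f : R[T;T⁻¹]) :
    L (LaurentPolynomial.C a * f) = a * L f := by
  rw [← LaurentPolynomial.smul_eq_C_mul, map_smul, smul_eq_mul]

variable (α : ℕ → ℂ)

theorem szego_isMonicOfDegree (n : ℕ) : IsMonicOfDegree (szego α n) n := by
  induction n with
  | zero => exact isMonicOfDegree_zero_iff.mpr rfl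
  | succ n ih =>
    have hX : IsMonicOfDegree (X * szego α n) (n + 1) := by
      simpa [add_comm] using (isMonicOfDegree_X (R := ℂ)).mul ih
    refine hX.sub ((natDegree_C_mul_le _ _).trans_lt (natDegree_reflect_le.trans_lt ?_))
    rw [natDegree_map, ih.natDegree_eq, max_self]
    exact n.lt_succ_self

def phi (n : ℕ) : LaurentPolynomial ℂ := toLaurent (szego α n)

def phiStar (n : ℕ) : LaurentPolynomial ℂ :=
  toLaurent (reflect n ((szego α n).map (starRingEnd ℂ)))

theorem phiStar_eq (n : ℕ) : phiStar α n = T n * conjInvert (phi α n) := by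
  have hdeg : ((szego α n).map (starRingEnd ℂ)).natDegree = n := by
    rw [natDegree_map, (szego_isMonicOfDegree α n).natDegree_eq]
  have hrev : reflect n ((szego α n).map (starRingEnd ℂ)) =
      ((szego α n).map (starRingEnd ℂ)).reverse := by
    rw [reverse, hdeg]
  rw [phiStar, hrev, toLaurent_reverse, hdeg, phi, conjInvert_toLaurent, mul_comm]

theorem conjInvert_phi (n : ℕ) : conjInvert (phi α n) = T (-n) * phiStar α n := by
  rw [phiStar_eq, T_mul_T_mul, neg_add_cancel, T_zero, one_mul]

theorem conjInvert_phiStar (n : ℕ) : conjInvert (phiStar α n) = T (-n) * phi α n := by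
  rw [phiStar_eq, map_mul, conjInvert_T, conjInvert_conjInvert]

theorem phi_zero : phi α 0 = 1 := map_one _

theorem phi_succ (n : ℕ) :
    phi α (n + 1) =
      T 1 * phi α n - LaurentPolynomial.C (starRingEnd ℂ (α n)) * phiStar α n := by
  rw [phi, szego, map_sub, map_mul, map_mul, toLaurent_X, toLaurent_C]
  rfl

theorem phiStar_succ (n : ℕ) :
    phiStar α (n + 1) = phiStar α n - LaurentPolynomial.C (α n) * (T 1 * phi α n) := by
  rw [phiStar_eq, phi_succ, map_sub, map_mul, map_mul, conjInvert_T, conjInvert_C,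
    Complex.conj_conj, conjInvert_phiStar, phiStar_eq α n, mul_sub, T_mul_T_mul, mul_left_comm,
    T_mul_T_mul]
  congr 4 <;> push_cast <;> ring

def rhoSq (j : ℕ) : ℂ := ((1 - Complex.normSq (α j) : ℝ) : ℂ)

def kappa (n : ℕ) : ℂ := ∏ j ∈ range n, rhoSq α j

/-- The coefficient of `Φ_j` in `Φ_m^*`; the convention `α₋₁ = -1` makes it `κ_m` at `j = 0`. -/
def starCoeff (m j : ℕ) : ℂ := -az α (j - 1) * ∏ i ∈ Ico j m, rhoSq α i

theorem phiStar_eq_sum (m : ℕ) :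
    phiStar α m = ∑ j ∈ range (m + 1), LaurentPolynomial.C (starCoeff α m j) * phi α j := by
  induction m with
  | zero => simp [starCoeff, az, phi_zero, phiStar, szego]
  | succ m ih =>
    have hrec : phiStar α (m + 1) = LaurentPolynomial.C (rhoSq α m) * phiStar α m -
        LaurentPolynomial.C (α m) * phi α (m + 1) := by
      rw [phiStar_succ, phi_succ, rhoSq, Complex.ofReal_sub, Complex.ofReal_one,
        ← Complex.mul_conj]
      simp only [map_sub, map_one, map_mul]
      ring
    rw [hrec, ih, mul_sum, sum_range_succ _ (m + 1), sub_eq_add_neg, ← neg_mul, ← map_neg]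
    congr 1
    · refine sum_congr rfl fun j hj => ?_
      rw [← mul_assoc, ← map_mul, starCoeff, starCoeff,
        prod_Ico_succ_top (Nat.lt_succ_iff.mp (mem_range.mp hj))]
      ring_nf
    · simp [starCoeff, az]

theorem map_T_mul_phi_succ (L : LaurentPolynomial ℂ →ₗ[ℂ] ℂ) (k : ℤ) (n : ℕ) :
    L (T (k - 1) * phi α (n + 1)) =
      L (T k * phi α n) - starRingEnd ℂ (α n) * L (T (k - 1) * phiStar α n) := by
  rw [phi_succ, mul_sub, T_mul_T_mul, sub_add_cancel, mul_left_comm, map_sub, map_C_mul]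

theorem map_T_mul_phiStar_succ (L : LaurentPolynomial ℂ →ₗ[ℂ] ℂ) (k : ℤ) (n : ℕ) :
    L (T (k - 1) * phiStar α (n + 1)) =
      L (T (k - 1) * phiStar α n) - α n * L (T k * phi α n) := by
  rw [phiStar_succ, mul_sub, mul_left_comm, T_mul_T_mul, sub_add_cancel, map_sub, map_C_mul]

structure IsSzegoFunctional (L : LaurentPolynomial ℂ →ₗ[ℂ] ℂ) : Prop where
  map_one : L 1 = 1
  map_szego : ∀ k : ℕ, 1 ≤ k → L (toLaurent (szego α k)) = 0
  map_polyBarInv_szego : ∀ k : ℕ, 1 ≤ k → L (polyBarInv (szego α k)) = 0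

namespace IsSzegoFunctional

variable {α} {L : LaurentPolynomial ℂ →ₗ[ℂ] ℂ}

theorem map_T_neg_mul_phiStar_self (hL : IsSzegoFunctional α L) {n : ℕ} (hn : 1 ≤ n) :
    L (T (-n) * phiStar α n) = 0 := by
  rw [← conjInvert_phi, phi, ← polyBarInv_eq_conjInvert]
  exact hL.map_polyBarInv_szego n hn

/-- `Φ_n ⊥ z^j` for `0 ≤ j < n` and `Φ_n^* ⊥ z^j` for `1 ≤ j ≤ n`. -/
theorem map_T_mul_eq_zero (hL : IsSzegoFunctional α L) (n : ℕ) :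
    (∀ k : ℤ, -n < k → k ≤ 0 → L (T k * phi α n) = 0) ∧
      (∀ k : ℤ, -n ≤ k → k < 0 → L (T k * phiStar α n) = 0) := by
  induction n with
  | zero => exact ⟨fun k _ _ => by omega, fun k _ _ => by omega⟩
  | succ n ih =>
    constructor
    · intro k hk1 hk2
      rcases hk2.lt_or_eq with hk2 | rfl
      · obtain ⟨k, rfl⟩ : ∃ k', k = k' - 1 := ⟨k + 1, by ring⟩
        rw [map_T_mul_phi_succ, ih.1 k (by omega) (by omega), ih.2 _ (by omega) (by omega),
          mul_zero, sub_zero]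
      · rw [T_zero, one_mul]
        exact hL.map_szego _ (Nat.le_add_left 1 n)
    · intro k hk1 hk2
      rcases hk1.eq_or_lt with rfl | hk1
      · exact hL.map_T_neg_mul_phiStar_self (Nat.le_add_left 1 n)
      · obtain ⟨k, rfl⟩ : ∃ k', k = k' - 1 := ⟨k + 1, by ring⟩
        rw [map_T_mul_phiStar_succ, ih.1 k (by omega) (by omega), ih.2 _ (by omega) (by omega),
          mul_zero, sub_zero]

theorem map_T_neg_mul_phi_self (hL : IsSzegoFunctional α L) (n : ℕ) :
    L (T (-n) * phi α n) = kappa α n := by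
  induction n with
  | zero => rw [Nat.cast_zero, neg_zero, T_zero, one_mul, phi_zero, hL.map_one, kappa,
      prod_range_zero]
  | succ n ih =>
    have hstar : L (T (-n - 1) * phiStar α n) = α n * kappa α n := by
      have h0 : L (T (-n - 1) * phiStar α (n + 1)) = 0 := by
        convert hL.map_T_neg_mul_phiStar_self (Nat.le_add_left 1 n) using 4
        push_cast
        ring
      rw [← sub_eq_zero, ← h0, map_T_mul_phiStar_succ, ih]
    rw [show (-((n + 1 : ℕ) : ℤ)) = -n - 1 by push_cast; ring, map_T_mul_phi_succ, ih, hstar,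
      kappa, kappa, prod_range_succ, rhoSq, Complex.ofReal_sub, Complex.ofReal_one,
      ← Complex.mul_conj]
    ring

theorem map_phi_mul_conjInvert_phi (hL : IsSzegoFunctional α L) (c s : ℕ) :
    L (phi α s * conjInvert (phi α c)) = if s = c then kappa α s else 0 := by
  rcases lt_or_ge s c with hsc | hcs
  · rw [if_neg hsc.ne, conjInvert_phi, phi,
      toLaurent_eq_sum_range (m := s + 1)
        (by rw [(szego_isMonicOfDegree α s).natDegree_eq]; omega), sum_mul, map_sum]
    refine sum_eq_zero fun k hk => ?_
    have hks := mem_range.mp hk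
    rw [mul_assoc, T_mul_T_mul, map_C_mul, (hL.map_T_mul_eq_zero c).2 _ (by omega) (by omega),
      mul_zero]
  · rw [show phi α c = toLaurent (szego α c) from rfl, conjInvert_toLaurent_eq_sum
      (m := c + 1) (by rw [(szego_isMonicOfDegree α c).natDegree_eq]; omega), mul_sum, map_sum]
    have hterm : ∀ k : ℕ,
        L (phi α s * (LaurentPolynomial.C (starRingEnd ℂ ((szego α c).coeff k)) * T (-k))) =
          starRingEnd ℂ ((szego α c).coeff k) * L (T (-k) * phi α s) := fun k => by
      rw [mul_comm, mul_assoc, map_C_mul]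
    simp only [hterm]
    rcases hcs.lt_or_eq with hcs | rfl
    · rw [if_neg hcs.ne', sum_eq_zero fun k hk => ?_]
      have hkc := mem_range.mp hk
      rw [(hL.map_T_mul_eq_zero s).1 _ (by omega) (by omega), mul_zero]
    · have hlead : (szego α c).coeff c = 1 := by
        simpa [(szego_isMonicOfDegree α c).natDegree_eq] using
          (szego_isMonicOfDegree α c).monic.coeff_natDegree
      rw [if_pos rfl, sum_range_succ, hlead, (starRingEnd ℂ).map_one, one_mul,
        hL.map_T_neg_mul_phi_self, sum_eq_zero fun k hk => ?_, zero_add]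
      rw [(hL.map_T_mul_eq_zero c).1 _ (by have := mem_range.mp hk; omega) (by omega), mul_zero]

end IsSzegoFunctional

theorem rhoSq_ne_zero {j : ℕ} (h : ‖α j‖ < 1) : rhoSq α j ≠ 0 := by
  rw [rhoSq, Complex.ofReal_ne_zero, sub_ne_zero, Complex.normSq_eq_norm_sq]
  have := norm_nonneg (α j)
  nlinarith

theorem kappa_ne_zero (hα : ∀ k, ‖α k‖ < 1) (n : ℕ) : kappa α n ≠ 0 :=
  prod_ne_zero_iff.mpr fun j _ => rhoSq_ne_zero α (hα j)

theorem genMom_eq (L : LaurentPolynomial ℂ →ₗ[ℂ] ℂ) (n : ℤ) (c s : ℕ) :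
    genMom L α n c s = L (phi α s * conjInvert (T n * phi α c)) / kappa α s := by
  rw [genMom, laurentBarInv_eq_conjInvert]
  rfl

theorem genMom_zero (hα : ∀ k, ‖α k‖ < 1) {L : LaurentPolynomial ℂ →ₗ[ℂ] ℂ}
    (hL : IsSzegoFunctional α L) (c s : ℕ) :
    genMom L α 0 c s = if s = c then 1 else 0 := by
  rw [genMom_eq, T_zero, one_mul, hL.map_phi_mul_conjInvert_phi]
  split_ifs
  · exact div_self (kappa_ne_zero α hα s)
  · exact zero_div _

theorem genMom_succ (L : LaurentPolynomial ℂ →ₗ[ℂ] ℂ) (n : ℤ) (c s : ℕ) :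
    genMom L α (n + 1) c s = genMom L α n (c + 1) s +
      ∑ j ∈ range (c + 1), α c * starRingEnd ℂ (starCoeff α c j) * genMom L α n j s := by
  have hT : T (n + 1) * phi α c = T n * phi α (c + 1) + ∑ j ∈ range (c + 1),
      LaurentPolynomial.C (starRingEnd ℂ (α c) * starCoeff α c j) * (T n * phi α j) := by
    have h1 : T 1 * phi α c =
        phi α (c + 1) + LaurentPolynomial.C (starRingEnd ℂ (α c)) * phiStar α c := by
      rw [phi_succ]
      ring
    rw [T_add, mul_assoc, h1, phiStar_eq_sum, mul_add, mul_sum, mul_sum]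
    congr 1
    refine sum_congr rfl fun j _ => ?_
    rw [map_mul]
    ring
  rw [genMom_eq, genMom_eq, hT, map_add, map_sum, mul_add, mul_sum, map_add, map_sum, add_div,
    sum_div]
  congr 1
  refine sum_congr rfl fun j _ => ?_
  rw [genMom_eq, map_mul conjInvert, conjInvert_C, mul_left_comm, map_C_mul, map_mul,
    Complex.conj_conj, mul_div_assoc]

/-- `ν_{n,r,s} = ⟨Φ_s, zⁿ Φ_r^*⟩ / ⟨Φ_s, Φ_s⟩`. -/
def genLinCoeff (L : LaurentPolynomial ℂ →ₗ[ℂ] ℂ) (α : ℕ → ℂ) (n : ℤ) (r s : ℕ) : ℂ :=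
  L (toLaurent (szego α s) *
      laurentBarInv (T n * toLaurent (reflect r ((szego α r).map (starRingEnd ℂ))))) /
    ∏ j ∈ range s, ((1 - Complex.normSq (α j) : ℝ) : ℂ)

theorem alpha_mul_genLinCoeff (L : LaurentPolynomial ℂ →ₗ[ℂ] ℂ) (n : ℤ) (r s : ℕ) :
    α r * genLinCoeff L α n r s = genMom L α (n + 1) r s - genMom L α n (r + 1) s := by
  have h : T (n + 1) * phi α r - T n * phi α (r + 1) =
      LaurentPolynomial.C (starRingEnd ℂ (α r)) * (T n * phiStar α r) := by
    rw [phi_succ, T_add]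
    ring
  rw [genMom_eq, genMom_eq, ← sub_div, ← map_sub, ← mul_sub, ← map_sub, h, map_mul conjInvert,
    conjInvert_C, Complex.conj_conj, mul_left_comm, map_C_mul, genLinCoeff,
    laurentBarInv_eq_conjInvert, mul_div_assoc]
  rfl

section Paths

theorem _root_.IsLatticePath.snd_nonneg {S : ℤ × ℤ → ℤ × ℤ → Prop} {p q : ℤ × ℤ} {l : List (ℤ × ℤ)}
    (h : IsLatticePath S p l q) : 0 ≤ p.2 := by
  cases l with
  | nil => exact h.2
  | cons _ _ => exact h.1

theorem _root_.IsLatticePath.fst_eq_add_length {S : ℤ × ℤ → ℤ × ℤ → Prop}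
    (hS : ∀ p st, S p st → st.1 = 1) {p q : ℤ × ℤ} {l : List (ℤ × ℤ)}
    (h : IsLatticePath S p l q) : q.1 = p.1 + l.length := by
  induction l generalizing p with
  | nil => simp [h.1]
  | cons st l ih =>
    obtain ⟨-, hst, hl⟩ := h
    rw [ih hl, Prod.fst_add, hS p st hst, List.length_cons]
    push_cast
    ring

def lukaPaths (p q : ℤ × ℤ) : Set (List (ℤ × ℤ)) := {l | IsLatticePath lukaStep p l q}

def lukaSum (p q : ℤ × ℤ) : ℂ := ∑ᶠ l ∈ lukaPaths p q, pathWeight (wtLstep α) p l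

theorem length_eq_of_mem_lukaPaths {p q : ℤ × ℤ} {l : List (ℤ × ℤ)} (h : l ∈ lukaPaths p q) :
    q.1 = p.1 + l.length :=
  IsLatticePath.fst_eq_add_length (fun _ _ h => h.1) h

theorem lukaSum_same_fst (x : ℤ) (c s : ℕ) :
    lukaSum α (x, c) (x, s) = if s = c then 1 else 0 := by
  have hnil : ∀ l ∈ lukaPaths (x, c) (x, s), l = [] := fun l hl =>
    List.eq_nil_of_length_eq_zero <| by
      have := length_eq_of_mem_lukaPaths hl
      simp only at this
      omega
  rw [lukaSum]
  split_ifs with h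
  · subst h
    have : lukaPaths (x, s) (x, s) = {[]} :=
      Set.eq_singleton_iff_unique_mem.mpr ⟨⟨rfl, Int.natCast_nonneg s⟩, hnil⟩
    rw [this, finsum_mem_singleton]
    rfl
  · have : lukaPaths (x, c) (x, s) = ∅ := by
      refine Set.eq_empty_of_forall_notMem fun l hl => ?_
      obtain rfl := hnil l hl
      exact h (by simpa using hl.1.symm)
    rw [this, finsum_mem_empty]

theorem mk_add_one_sub (x : ℤ) (c j : ℕ) :
    (x, (c : ℤ)) + (1, (j : ℤ) - c) = (x + 1, (j : ℤ)) := by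
  simp

theorem lukaPaths_eq_biUnion {x : ℤ} (c : ℕ) {q : ℤ × ℤ} (h : x < q.1) :
    lukaPaths (x, c) q = ⋃ j ∈ (range (c + 2) : Set ℕ),
      List.cons (1, (j : ℤ) - c) '' lukaPaths (x + 1, j) q := by
  ext l
  simp only [Set.mem_iUnion, Set.mem_image, coe_range, Set.mem_Iio, exists_prop]
  constructor
  · intro hl
    cases l with
    | nil => exact absurd (congrArg Prod.fst hl.1) (by simp only; omega)
    | cons st l =>
      obtain ⟨-, ⟨hst1, hst2⟩, hl⟩ := hl
      have h0 := hl.snd_nonneg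
      simp only [Prod.snd_add] at h0
      have hst : st = (1, ((c + st.2).toNat : ℤ) - c) := Prod.ext hst1 (by simp; omega)
      refine ⟨(c + st.2).toNat, by omega, l, ?_, congrArg (· :: l) hst.symm⟩
      rwa [hst, mk_add_one_sub] at hl
  · rintro ⟨j, hj, l, hl, rfl⟩
    refine ⟨Int.natCast_nonneg c, ⟨rfl, by omega⟩, ?_⟩
    rwa [mk_add_one_sub]

theorem lukaPaths_finite (x : ℤ) (c : ℕ) (q : ℤ × ℤ) : (lukaPaths (x, c) q).Finite := by
  rcases lt_or_ge q.1 x with hq | hq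
  · refine Set.finite_empty.subset fun l hl => ?_
    have := length_eq_of_mem_lukaPaths hl
    simp only at this
    omega
  obtain ⟨n, hn⟩ : ∃ n : ℕ, q.1 = x + n := ⟨(q.1 - x).toNat, by omega⟩
  induction n generalizing x c with
  | zero =>
    refine (Set.finite_singleton []).subset fun l hl => ?_
    have := length_eq_of_mem_lukaPaths hl
    simp only at this
    exact List.eq_nil_of_length_eq_zero (by omega)
  | succ n ih =>
    rw [lukaPaths_eq_biUnion c (by omega)]
    exact (finite_toSet _).biUnion fun j _ =>
      (ih (x + 1) j (by omega) (by push_cast at hn; omega)).image _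

theorem lukaSum_eq_sum {x : ℤ} (c : ℕ) {q : ℤ × ℤ} (h : x < q.1) :
    lukaSum α (x, c) q =
      ∑ j ∈ range (c + 2), wtLstep α (x, c) (1, (j : ℤ) - c) * lukaSum α (x + 1, j) q := by
  have hdisj : (range (c + 2) : Set ℕ).PairwiseDisjoint fun j : ℕ =>
      List.cons (1, (j : ℤ) - c) '' lukaPaths (x + 1, j) q := by
    intro j _ j' _ hne
    refine Set.disjoint_left.mpr ?_
    rintro _ ⟨l, -, rfl⟩ ⟨l', -, hl⟩
    have := (Prod.mk.inj (List.cons.inj hl).1).2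
    exact hne (by omega)
  rw [lukaSum, lukaPaths_eq_biUnion c h,
    finsum_mem_biUnion hdisj (finite_toSet _) fun j _ => (lukaPaths_finite _ _ _).image _,
    finsum_mem_coe_finset]
  refine sum_congr rfl fun j _ => ?_
  rw [finsum_mem_image List.cons_injective.injOn, lukaSum, mul_finsum_mem]
  refine finsum_mem_congr rfl fun l _ => ?_
  rw [pathWeight, mk_add_one_sub]

theorem wtLstep_down (x : ℤ) {c j : ℕ} (hj : j ≤ c) :
    wtLstep α (x, c) (1, (j : ℤ) - c) = α c * starRingEnd ℂ (starCoeff α c j) := by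
  have hprod : ∏ i ∈ Ico (j : ℤ) c, ((1 - Complex.normSq (az α i) : ℝ) : ℂ) =
      ∏ i ∈ Ico j c, rhoSq α i := by
    refine prod_nbij' Int.toNat (↑) (fun i hi => ?_) (fun i hi => ?_) (fun i hi => ?_)
      (fun i _ => Int.toNat_natCast i) (fun i hi => ?_)
    all_goals simp only [mem_Ico] at hi ⊢
    · omega
    · omega
    · omega
    · rw [az, if_pos (by omega), rhoSq]
  have hconj : ∏ i ∈ Ico j c, starRingEnd ℂ (rhoSq α i) = ∏ i ∈ Ico j c, rhoSq α i :=
    prod_congr rfl fun i _ => Complex.conj_ofReal _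
  rw [wtLstep, if_neg (by simp only; omega)]
  simp only [add_sub_cancel, hprod, starCoeff, map_mul, map_neg, map_prod, hconj]
  rw [show az α c = α c by simp [az]]
  ring

theorem lukaSum_eq_genMom (hα : ∀ k, ‖α k‖ < 1) {L : LaurentPolynomial ℂ →ₗ[ℂ] ℂ}
    (hL : IsSzegoFunctional α L) (n : ℕ) (x : ℤ) (c s : ℕ) :
    lukaSum α (x, c) (x + n, s) = genMom L α n c s := by
  induction n generalizing x c with
  | zero => rw [Nat.cast_zero, add_zero, lukaSum_same_fst, genMom_zero α hα hL]
  | succ n ih =>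
    rw [show x + ((n + 1 : ℕ) : ℤ) = x + 1 + n by push_cast; ring,
      show ((n + 1 : ℕ) : ℤ) = n + 1 from Nat.cast_succ n, lukaSum_eq_sum α c (by omega),
      sum_range_succ, genMom_succ, add_comm]
    congr 1
    · rw [show ((c + 1 : ℕ) : ℤ) - c = 1 by push_cast; ring, wtLstep, if_pos rfl, one_mul, ih]
    · refine sum_congr rfl fun j hj => ?_
      rw [wtLstep_down α x (Nat.lt_succ_iff.mp (mem_range.mp hj)), ih]

theorem finsum_head_ne_up (x : ℤ) (c : ℕ) (q : ℤ × ℤ) :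
    ∑ᶠ l ∈ {l | IsLatticePath lukaStep (x, c) l q ∧ l.head? ≠ some (1, 1)},
        pathWeight (wtLstep α) (x, c) l =
      lukaSum α (x, c) q - lukaSum α (x + 1, ((c + 1 : ℕ) : ℤ)) q := by
  have hstep : (x, (c : ℤ)) + (1, 1) = (x + 1, ((c + 1 : ℕ) : ℤ)) := by simp
  have hup : lukaPaths (x, c) q ∩ {l | l.head? = some (1, 1)} =
      List.cons (1, 1) '' lukaPaths (x + 1, ((c + 1 : ℕ) : ℤ)) q := by
    ext l
    cases l with
    | nil => simp
    | cons st l =>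
      simp only [Set.mem_inter_iff, Set.mem_ofPred_eq, List.head?_cons, Option.some.injEq,
        Set.mem_image, List.cons.injEq]
      constructor
      · rintro ⟨hl, rfl⟩
        exact ⟨l, hstep ▸ hl.2.2, rfl, rfl⟩
      · rintro ⟨l, hl, rfl, rfl⟩
        exact ⟨⟨Int.natCast_nonneg c, ⟨rfl, le_rfl⟩, hstep ▸ hl⟩, rfl⟩
  have h := finsum_mem_inter_add_sdiff (f := pathWeight (wtLstep α) (x, c))
    {l | l.head? = some (1, 1)} (lukaPaths_finite x c q)
  rw [hup, finsum_mem_image List.cons_injective.injOn] at h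
  rw [eq_sub_iff_add_eq, add_comm]
  refine Eq.trans ?_ h
  congr 1
  refine finsum_mem_congr rfl fun l _ => ?_
  rw [pathWeight, wtLstep, if_pos rfl, one_mul, hstep]

end Paths

end OPUC

/-- the generalized linearization coefficient
`ν_{n,r,s} = ⟨Φ_s(z), zⁿ·Φ_r^*(z)⟩ / ⟨Φ_s(z), Φ_s(z)⟩`, for `α_r ≠ 0`, equals
`α_r⁻¹` times the weight sum over Łukasiewicz paths from `(-1,r)` to `(n,s)` whose
first step is not an up-step. -/
theorem nu_eq_luka (α : ℕ → ℂ) (hα : ∀ k, ‖α k‖ < 1)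
    (L : LaurentPolynomial ℂ →ₗ[ℂ] ℂ) (hL1 : L 1 = 1)
    (hLphi : ∀ k : ℕ, 1 ≤ k → L (Polynomial.toLaurent (szego α k)) = 0)
    (hLbar : ∀ k : ℕ, 1 ≤ k → L (polyBarInv (szego α k)) = 0)
    (n r s : ℕ) (hαr : α r ≠ 0) :
    L (Polynomial.toLaurent (szego α s) *
        laurentBarInv (LaurentPolynomial.T (n : ℤ) *
          Polynomial.toLaurent (Polynomial.reflect r ((szego α r).map (starRingEnd ℂ))))) /
      (∏ j ∈ Finset.range s, ((1 - Complex.normSq (α j) : ℝ) : ℂ)) =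
    (α r)⁻¹ *
      ∑ᶠ p ∈ {l : List (ℤ × ℤ) |
          IsLatticePath lukaStep (-1, (r : ℤ)) l ((n : ℤ), (s : ℤ)) ∧
            l.head? ≠ some (1, 1)},
        pathWeight (wtLstep α) (-1, (r : ℤ)) p := by
  have hL : OPUC.IsSzegoFunctional α L := ⟨hL1, hLphi, hLbar⟩
  have hall := OPUC.lukaSum_eq_genMom α hα hL (n + 1) (-1) r s
  have hup := OPUC.lukaSum_eq_genMom α hα hL n 0 (r + 1) s
  rw [show (-1 : ℤ) + ((n + 1 : ℕ) : ℤ) = n by push_cast; ring, Nat.cast_succ] at hall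
  rw [zero_add] at hup
  change OPUC.genLinCoeff L α n r s = _
  rw [OPUC.finsum_head_ne_up, neg_add_cancel, hall, hup, ← OPUC.alpha_mul_genLinCoeff,
    inv_mul_cancel_left₀ hαr]

end
end
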